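/- arXiv:2005.04180 — 11 statements merged into one kernel-verified Lean document; each statement's English description precedes it below -/
import Mathlib

section
/- The horizontal trapezoid T_{a,b} = conv((0,0),(0,1),(a,1),(b,0)) with 0 ≤ a ≤ b and b ≥ 1 is a panoptigon if and only if a ≤ 2. -/
/-- The lattice points of the trapezoid `T_{a,b} = conv((0,0),(0,1),(a,1),(b,0))`:
the points `(0,0),...,(b,0)` at height `0` and `(0,1),...,(a,1)` at height `1`. -/
def trapezoidPts (a b : ℤ) : Set (ℤ × ℤ) :=
  {q | (q.2 = 0 ∧ 0 ≤ q.1 ∧ q.1 ≤ b) ∨ (q.2 = 1 ∧ 0 ≤ q.1 ∧ q.1 ≤ a)}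

/-- `T_{a,b}` with `0 ≤ a ≤ b`, `b ≥ 1` is a panoptigon if and only if `a ≤ 2`. -/
theorem trapezoid_panoptigon_iff (a b : ℤ) (ha : 0 ≤ a) (hab : a ≤ b) (hb : 1 ≤ b) :
    (∃ p ∈ trapezoidPts a b, ∀ q ∈ trapezoidPts a b,
      q = p ∨ Int.gcd (q.1 - p.1) (q.2 - p.2) = 1) ↔ a ≤ 2 := by
  constructor
  · rintro ⟨⟨px, py⟩, hp, hsees⟩
    by_contra h
    push_neg at h
    rcases hp with ⟨hpy, hpx0, hpx1⟩ | ⟨hpy, hpx0, hpx1⟩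
    · obtain rfl : py = 0 := hpy
      have hpx0' : 0 ≤ px := hpx0
      have hpx1' : px ≤ b := hpx1
      obtain ⟨x, hx0, hx1, hd⟩ : ∃ x, 0 ≤ x ∧ x ≤ b ∧ (x - px = 2 ∨ x - px = -2) := by
        rcases le_or_gt (px + 2) b with hc | hc
        · exact ⟨px + 2, by omega, by omega, by omega⟩
        · exact ⟨px - 2, by omega, by omega, by omega⟩
      rcases hsees (x, 0) (Or.inl ⟨rfl, hx0, hx1⟩) with heq | hgcd
      · simp only [Prod.mk.injEq] at heq; omega
      · simp only [sub_self, Int.gcd_zero_right] at hgcd; omega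
    · obtain rfl : py = 1 := hpy
      have hpx0' : 0 ≤ px := hpx0
      have hpx1' : px ≤ a := hpx1
      obtain ⟨x, hx0, hx1, hd⟩ : ∃ x, 0 ≤ x ∧ x ≤ a ∧ (x - px = 2 ∨ x - px = -2) := by
        rcases le_or_gt (px + 2) a with hc | hc
        · exact ⟨px + 2, by omega, by omega, by omega⟩
        · exact ⟨px - 2, by omega, by omega, by omega⟩
      rcases hsees (x, 1) (Or.inr ⟨rfl, hx0, hx1⟩) with heq | hgcd
      · simp only [Prod.mk.injEq] at heq; omega
      · simp only [sub_self, Int.gcd_zero_right] at hgcd; omega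
  · intro ha2
    refine ⟨(min a 1, 1), Or.inr ⟨rfl, by simp [ha], by simp⟩, ?_⟩
    rintro ⟨x, y⟩ hq
    rcases hq with ⟨hy, hx0, hx1⟩ | ⟨hy, hx0, hx1⟩
    · obtain rfl : y = 0 := hy
      right
      simp only [zero_sub]
      rw [Int.gcd]
      simp
    · obtain rfl : y = 1 := hy
      have hx0' : 0 ≤ x := hx0
      have hx1' : x ≤ a := hx1
      rcases eq_or_ne x (min a 1) with hxe | hxe
      · left; rw [hxe]
      · right
        simp only [sub_self, Int.gcd_zero_right]
        omega
end

section
/- If a convex lattice polygon P contains four horizontally consecutive lattice points (a,b), (a+1,b), (a+2,b), (a+3,b) with b ≥ 3, and also contains the origin, then P contains a lattice point invisible from the origin. -/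
/-!
At height `b - 1` the triangle with vertices `(0,0)`, `(a,b)`, `(a+3,b)` is a horizontal segment
of length `3 (b - 1) / b ≥ 2`, so it contains a lattice point `(x, b - 1)` with `x` even. Since
`b` is odd, `b - 1` is even as well, and `2` divides `gcd x (b - 1)`.
-/

open Set

theorem exists_even_int_mem_Icc {u v : ℝ} (h : u + 2 ≤ v) :
    ∃ n : ℤ, Even n ∧ u ≤ n ∧ (n : ℝ) ≤ v := by
  refine ⟨2 * ⌈u / 2⌉, even_two_mul _, ?_, ?_⟩
  · have := Int.le_ceil (u / 2)
    push_cast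
    linarith
  · have := Int.ceil_lt_add_one (u / 2)
    push_cast
    linarith

theorem Int.one_lt_gcd_of_dvd {d : ℕ} {x y : ℤ} (hd : 1 < d) (hx : (d : ℤ) ∣ x)
    (hy : (d : ℤ) ∣ y) (hy0 : y ≠ 0) : 1 < Int.gcd x y :=
  hd.trans_le <| Nat.le_of_dvd (Int.gcd_pos_of_ne_zero_right x hy0)
    (Int.natCast_dvd_natCast.mp (Int.dvd_coe_gcd hx hy))

theorem smul_lineMap_mem_convexHull {𝕜 E : Type*} [Ring 𝕜] [PartialOrder 𝕜] [AddRightMono 𝕜]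
    [AddCommGroup E] [Module 𝕜 E] (p q : E) {s t : 𝕜} (hs : s ∈ Icc 0 1) (ht : t ∈ Icc 0 1) :
    t • AffineMap.lineMap p q s ∈ convexHull 𝕜 {0, p, q} := by
  have hconv := convex_convexHull 𝕜 ({0, p, q} : Set E)
  have hp : p ∈ convexHull 𝕜 {0, p, q} := subset_convexHull 𝕜 _ (by simp)
  have hq : q ∈ convexHull 𝕜 {0, p, q} := subset_convexHull 𝕜 _ (by simp)
  exact hconv.smul_mem_of_zero_mem (subset_convexHull 𝕜 _ (by simp))
    (hconv.lineMap_mem hp hq hs) ht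

theorem mk_mem_convexHull_triangle {a b w x y : ℝ} (hb : 0 < b) (hy : 0 < y) (hyb : y ≤ b)
    (hw : 0 < w) (hax : a * (y / b) ≤ x) (hxa : x ≤ (a + w) * (y / b)) :
    (x, y) ∈ convexHull ℝ {((0 : ℝ), (0 : ℝ)), (a, b), (a + w, b)} := by
  have ht : 0 < y / b := div_pos hy hb
  have hs : (x / (y / b) - a) / w ∈ Icc (0 : ℝ) 1 := by
    constructor
    · rw [← le_div_iff₀ ht] at hax
      exact div_nonneg (by linarith) hw.le
    · rw [← div_le_iff₀ ht] at hxa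
      rw [div_le_one hw]
      linarith
  have hmem := smul_lineMap_mem_convexHull (a, b) (a + w, b) hs
    ⟨ht.le, (div_le_one hb).mpr hyb⟩
  rw [Prod.mk_zero_zero]
  convert hmem using 1
  rw [AffineMap.lineMap_apply]
  ext <;> simp only [vsub_eq_sub, vadd_eq_add, Prod.fst_add, Prod.snd_add, Prod.smul_fst,
    Prod.smul_snd, Prod.fst_sub, Prod.snd_sub, smul_eq_mul] <;> field_simp <;> ring

/-- If `b ≥ 3` is odd, the triangle with vertices `(0,0)`, `(a,b)`, `(a+3,b)` contains
a lattice point, different from the origin, that is invisible from the origin. -/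
theorem triangle_contains_invisible (a b : ℤ) (hb : 3 ≤ b) (hodd : Odd b) :
    ∃ x y : ℤ,
      ((x : ℝ), (y : ℝ)) ∈ convexHull ℝ
        ({((0 : ℝ), (0 : ℝ)), ((a : ℝ), (b : ℝ)), ((a : ℝ) + 3, (b : ℝ))} : Set (ℝ × ℝ)) ∧
      (x, y) ≠ (0, 0) ∧ 1 < Int.gcd x y := by
  have hbR : (3 : ℝ) ≤ b := by exact_mod_cast hb
  have hwidth : (a : ℝ) * ((b - 1) / b) + 2 ≤ (a + 3) * ((b - 1) / b) := by
    rw [add_mul, add_le_add_iff_left, ← mul_div_assoc, le_div_iff₀ (by linarith)]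
    linarith
  obtain ⟨x, hx_even, hax, hxa⟩ := exists_even_int_mem_Icc hwidth
  refine ⟨x, b - 1, ?_, by simp only [ne_eq, Prod.mk.injEq, not_and]; omega, ?_⟩
  · push_cast
    exact mk_mem_convexHull_triangle (by linarith) (by linarith) (by linarith) three_pos hax hxa
  · exact Int.one_lt_gcd_of_dvd one_lt_two (even_iff_two_dvd.mp hx_even)
      (even_iff_two_dvd.mp (hodd.sub_odd odd_one)) (by omega)
end

section
/- Let P be a convex lattice polygon all of whose lattice points are visible from the origin (a panoptigon with panoptigon point at the origin), and suppose ⟨1,0⟩ realizes the lattice diameter, i.e., P contains k ≥ 4 consecutive lattice points on some horizontal line y = b. Then b ∈ {-1, 1}. -/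
/-- If `P` is a convex set containing the origin, all of whose lattice points are visible
from the origin, and `P` contains four horizontally consecutive lattice points at height
`b`, then `b = 1` or `b = -1`. -/
theorem four_consecutive_height (P : Set (ℝ × ℝ)) (hconv : Convex ℝ P)
    (h0 : ((0 : ℝ), (0 : ℝ)) ∈ P)
    (hvis : ∀ x y : ℤ, ((x : ℝ), (y : ℝ)) ∈ P → (x = 0 ∧ y = 0) ∨ Int.gcd x y = 1)
    (a b : ℤ)
    (hfour : ∀ i : ℤ, 0 ≤ i → i ≤ 3 → (((a : ℝ) + (i : ℝ)), (b : ℝ)) ∈ P) :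
    b = 1 ∨ b = -1 := by
  by_contra hb
  push_neg at hb
  obtain ⟨hb1, hbm1⟩ := hb
  rcases eq_or_ne b 0 with rfl | hb0
  · -- b = 0 : all four points must have |x| ≤ 1
    have h1 := hvis a 0 (by simpa using hfour 0 le_rfl (by norm_num))
    have h2 := hvis (a+3) 0 (by push_cast; simpa using hfour 3 (by norm_num) le_rfl)
    simp only [Int.gcd, Int.natAbs_zero, Nat.gcd_zero_right] at h1 h2
    omega
  have twodvd : ∀ x y : ℤ, Even x → Even y → y ≠ 0 → ((x:ℝ), (y:ℝ)) ∈ P → False := by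
    intro x y hx hy hy0 hmem
    rcases hvis x y hmem with ⟨_, h⟩ | h
    · exact hy0 h
    · have h2x : 2 ∣ x.natAbs := by
        rcases hx with ⟨k, hk⟩; omega
      have h2y : 2 ∣ y.natAbs := by
        rcases hy with ⟨k, hk⟩; omega
      have : 2 ∣ Int.gcd x y := Nat.dvd_gcd h2x h2y
      omega
  rcases Int.even_or_odd b with hbe | hbo
  · -- b even, nonzero
    by_cases h : Even a
    · exact twodvd a b h hbe hb0 (by simpa using hfour 0 le_rfl (by norm_num))
    · refine twodvd (a+1) b (by rw [Int.even_add_one]; simpa using h) hbe hb0 ?_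
      push_cast
      simpa using hfour 1 (by norm_num) (by norm_num)
  · -- b odd, |b| ≥ 3
    have hm : (3:ℤ) ≤ |b| := by
      rcases hbo with ⟨k, hk⟩
      rcases abs_cases b with ⟨h, _⟩ | ⟨h, _⟩ <;> omega
    set M : ℝ := |(b:ℝ)| with hM
    have hM3 : (3:ℝ) ≤ M := by
      rw [hM, ← Int.cast_abs]
      exact_mod_cast hm
    have hMpos : (0:ℝ) < M := by linarith
    set t : ℝ := (M - 1) / M with ht
    have ht0 : 0 < t := by
      apply div_pos <;> linarith
    have ht1 : t ≤ 1 := by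
      rw [ht, div_le_one hMpos]; linarith
    have ht23 : 2/3 ≤ t := by
      rw [ht, div_le_div_iff₀ (by norm_num) hMpos]; linarith
    -- key membership lemma
    have key : ∀ x : ℝ, t * a ≤ x → x ≤ t * a + 3 * t → ((x, t * (b:ℝ)) : ℝ × ℝ) ∈ P := by
      intro x hx1 hx2
      have hA : ((a:ℝ), (b:ℝ)) ∈ P := by simpa using hfour 0 le_rfl (by norm_num)
      have hB : ((a:ℝ) + 3, (b:ℝ)) ∈ P := by push_cast; simpa using hfour 3 (by norm_num) le_rfl
      set μ : ℝ := (x - t * a) / (3 * t) with hμ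
      have hμ0 : 0 ≤ μ := by
        apply div_nonneg (by linarith) (by linarith)
      have hμ1 : μ ≤ 1 := by
        rw [hμ, div_le_one (by linarith)]; linarith
      have hq : ((1 - μ) • (((a:ℝ), (b:ℝ)) : ℝ × ℝ) + μ • (((a:ℝ) + 3, (b:ℝ)) : ℝ × ℝ)) ∈ P :=
        hconv hA hB (by linarith) hμ0 (by ring)
      have hfin := hconv h0 hq (by linarith : (0:ℝ) ≤ 1 - t) (le_of_lt ht0) (by ring)
      have : (1 - t) • (((0:ℝ), (0:ℝ)) : ℝ × ℝ) +
          t • ((1 - μ) • (((a:ℝ), (b:ℝ)) : ℝ × ℝ) + μ • (((a:ℝ) + 3, (b:ℝ)) : ℝ × ℝ))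
          = ((x, t * (b:ℝ)) : ℝ × ℝ) := by
        have h3t : μ * (3 * t) = x - t * a := by
          rw [hμ]; field_simp
        simp only [Prod.smul_mk, Prod.mk_add_mk, smul_eq_mul, Prod.mk.injEq]
        constructor
        · nlinarith [h3t]
        · ring
      rwa [this] at hfin
    -- the target height
    set c : ℤ := if 0 < b then b - 1 else b + 1 with hc
    have hcR : (c : ℝ) = t * b := by
      rw [ht, hM]
      rcases lt_or_ge 0 b with h | h
      · rw [hc, if_pos h, abs_of_pos (by exact_mod_cast h)]
        push_cast
        field_simp
      · have hbneg : b < 0 := lt_of_le_of_ne h hb0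
        rw [hc, if_neg (not_lt.mpr h), abs_of_neg (by exact_mod_cast hbneg)]
        push_cast
        have hne : -(b:ℝ) ≠ 0 := by
          simp only [neg_ne_zero]
          exact_mod_cast hb0
        rw [div_mul_eq_mul_div, eq_div_iff hne]
        ring
      
    have hceven : Even c := by
      rcases hbo with ⟨k, hk⟩
      rcases lt_or_ge 0 b with h | h
      · rw [hc, if_pos h]; exact ⟨k, by omega⟩
      · rw [hc, if_neg (not_lt.mpr h)]; exact ⟨k+1, by omega⟩
    have hc0 : c ≠ 0 := by
      rw [hc]; rcases lt_or_ge 0 b with h | h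
      · simp [h]; omega
      · simp [not_lt.mpr h, h]; omega
    -- even integer in [t*a, t*a + 3*t]
    set x : ℤ := 2 * ⌈t * (a:ℝ) / 2⌉ with hx
    have hx1 : t * a ≤ (x:ℝ) := by
      have := Int.le_ceil (t * (a:ℝ) / 2)
      push_cast [hx]; linarith
    have hx2 : (x:ℝ) ≤ t * a + 3 * t := by
      have := Int.ceil_lt_add_one (t * (a:ℝ) / 2)
      have h2 : (2:ℝ) ≤ 3 * t := by linarith
      push_cast [hx]; linarith
    exact twodvd x c ⟨⌈t * (a:ℝ) / 2⌉, by omega⟩ hceven hc0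
      (by rw [hcR]; exact key x hx1 hx2)
end

section
/- Any panoptigon P of lattice width at least 3 satisfies |P ∩ ℤ²| ≤ 13. -/
/-!
Let `p₀` be the panoptigon point. If a lattice point `q ≠ p₀` of `P` were congruent to `p₀`
modulo 2, the midpoint of `p₀` and `q` would be a lattice point hiding `q`; so `q - p₀` falls into
one of the 12 classes of `(ℤ/4)²` outside `2(ℤ/4)²`, that is, into one of 6 classes up to sign.
Each such class `±κ` holds at most two lattice points of `P`, whence `1 + 6 · 2 = 13`:
* two points in opposite classes have a lattice midpoint `≡ p₀ (mod 2)`, which must be `p₀`;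
* three distinct points `x, x + 4h, x + 4k` of one class are impossible: if `h, k` are independent
  modulo 2, the triangle they span contains `x + s h + t k` for `0 ≤ s ≤ 3` and a fixed `t`, and two
  of these are `≡ p₀ (mod 2)`; otherwise two of the three points differ by some `8v`;
* `P` contains no nine consecutive collinear lattice points `p + j e`: if `p₀` is on their line, two
  of them are `≡ p₀ (mod 2)`. If not, lattice width `≥ 3` yields a lattice point at lattice distance
  `≥ 2` from the line, and the triangle it spans with `p, p + 8e` contains four consecutive lattice
  points of the adjacent parallel line; together with `p, p + e` they meet every class modulo 2, so
  again two of them are `≡ p₀ (mod 2)`.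
-/

def latticeEmb : ℤ × ℤ → ℝ × ℝ := fun p => ((p.1 : ℝ), (p.2 : ℝ))

lemma Set.ncard_le_of_forall_finset_subset {α : Type*} {s : Set α} {n : ℕ}
    (h : ∀ t : Finset α, ↑t ⊆ s → t.card ≤ n) : s.ncard ≤ n := by
  have hs : s.Finite := by
    by_contra hs
    obtain ⟨t, hts, ht⟩ := Set.Infinite.exists_subset_card_eq hs (n + 1)
    have := h t hts
    omega
  rw [Set.ncard_eq_toFinset_card s hs]
  exact h hs.toFinset (by simp)

namespace Panoptigon

section Cross

variable {R : Type*} [CommRing R]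

def cross (u v : R × R) : R := u.1 * v.2 - u.2 * v.1

@[simp] lemma cross_self (u : R × R) : cross u u = 0 := by
  simp only [cross]; ring

@[simp] lemma cross_neg_left (u v : R × R) : cross (-u) v = -cross u v := by
  simp only [cross, Prod.fst_neg, Prod.snd_neg]; ring

@[simp] lemma cross_add_right (u v w : R × R) : cross u (v + w) = cross u v + cross u w := by
  simp only [cross, Prod.fst_add, Prod.snd_add]; ring

@[simp] lemma cross_sub_right (u v w : R × R) : cross u (v - w) = cross u v - cross u w := by
  simp only [cross, Prod.fst_sub, Prod.snd_sub]; ring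

@[simp] lemma cross_smul_right (u v : R × R) (c : R) : cross u (c • v) = c * cross u v := by
  simp only [cross, Prod.smul_fst, Prod.smul_snd, smul_eq_mul]; ring

@[simp] lemma cross_nsmul_right (u v : R × R) (n : ℕ) : cross u (n • v) = n * cross u v := by
  rw [← Nat.cast_smul_eq_nsmul R, cross_smul_right]

end Cross

lemma exists_cross_eq_one {e : ℤ × ℤ} (he : IsCoprime e.1 e.2) : ∃ w, cross e w = 1 := by
  obtain ⟨a, b, hab⟩ := he
  exact ⟨(-b, a), by simp only [cross]; linear_combination hab⟩

lemma exists_eq_smul_of_cross_eq_zero {e d : ℤ × ℤ} (he : IsCoprime e.1 e.2)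
    (h : cross e d = 0) : ∃ j : ℤ, d = j • e := by
  obtain ⟨a, b, hab⟩ := he
  refine ⟨a * d.1 + b * d.2, Prod.ext ?_ ?_⟩ <;> simp only [cross] at h <;>
    simp only [Prod.smul_fst, Prod.smul_snd, smul_eq_mul]
  · linear_combination -d.1 * hab - b * h
  · linear_combination -d.2 * hab + a * h

lemma exists_pos_smul_isCoprime_eq {v : ℤ × ℤ} (hv : v ≠ 0) :
    ∃ g : ℤ, 0 < g ∧ ∃ e : ℤ × ℤ, IsCoprime e.1 e.2 ∧ v = g • e := by
  have hg : 0 < Int.gcd v.1 v.2 :=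
    Int.gcd_pos_iff.2 (by contrapose! hv; exact Prod.ext hv.1 hv.2)
  obtain ⟨g, a, b, hg, hab, h1, h2⟩ := Int.exists_gcd_one' hg
  refine ⟨g, by exact_mod_cast hg, (a, b), Int.isCoprime_iff_gcd_eq_one.2 hab, Prod.ext ?_ ?_⟩
  · simp [h1, mul_comm]
  · simp [h2, mul_comm]

def modReduce (n : ℕ) : ℤ × ℤ →+ ZMod n × ZMod n :=
  (Int.castAddHom (ZMod n)).prodMap (Int.castAddHom (ZMod n))

@[simp] lemma modReduce_apply (n : ℕ) (v : ℤ × ℤ) :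
    modReduce n v = ((v.1 : ZMod n), (v.2 : ZMod n)) := rfl

lemma modReduce_eq_zero_iff {n : ℕ} {v : ℤ × ℤ} : modReduce n v = 0 ↔ ∃ d, v = n • d := by
  simp only [modReduce_apply, Prod.ext_iff, Prod.fst_zero, Prod.snd_zero,
    ZMod.intCast_zmod_eq_zero_iff_dvd, nsmul_eq_mul]
  constructor
  · rintro ⟨⟨a, ha⟩, ⟨b, hb⟩⟩
    exact ⟨(a, b), ha, hb⟩
  · rintro ⟨d, h1, h2⟩
    exact ⟨⟨d.1, h1⟩, ⟨d.2, h2⟩⟩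

lemma cross_modReduce (n : ℕ) (u v : ℤ × ℤ) :
    cross (modReduce n u) (modReduce n v) = ((cross u v : ℤ) : ZMod n) := by
  simp [cross]

lemma exists_eq_add_two_smul_of_odd_cross {u v : ℤ × ℤ} (h : Odd (cross u v)) (x : ℤ × ℤ) :
    ∃ σ τ : ℤ, (σ = 0 ∨ σ = 1) ∧ (τ = 0 ∨ τ = 1) ∧ ∃ d, x = σ • u + τ • v + 2 • d := by
  have hspan : ∀ U V X : ZMod 2 × ZMod 2, cross U V = 1 → ∃ s t : ZMod 2, X = s • U + t • V := by
    decide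
  have hlift : ∀ s : ZMod 2, ∃ σ : ℤ, (σ = 0 ∨ σ = 1) ∧ (σ : ZMod 2) = s := by
    intro s
    exact ⟨s.val, by have := ZMod.val_lt s; omega, by simp⟩
  obtain ⟨s, t, hst⟩ := hspan (modReduce 2 u) (modReduce 2 v) (modReduce 2 x)
    (by rw [cross_modReduce, ZMod.intCast_eq_one_iff_odd]; exact h)
  obtain ⟨σ, hσ, rfl⟩ := hlift s
  obtain ⟨τ, hτ, rfl⟩ := hlift t
  obtain ⟨d, hd⟩ := modReduce_eq_zero_iff.1
    (show modReduce 2 (x - σ • u - τ • v) = 0 by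
      rw [map_sub, map_sub, map_zsmul, map_zsmul, hst, ← Int.cast_smul_eq_zsmul (ZMod 2),
        ← Int.cast_smul_eq_zsmul (ZMod 2)]
      abel)
  exact ⟨σ, τ, hσ, hτ, d, by rw [← hd]; abel⟩

lemma exists_eq_two_smul_of_even_cross {u v : ℤ × ℤ} (h : Even (cross u v)) :
    (∃ a, u = 2 • a) ∨ (∃ a, v = 2 • a) ∨ ∃ a, v = u + 2 • a := by
  have hdep : ∀ U V : ZMod 2 × ZMod 2, cross U V = 0 → U = 0 ∨ V = 0 ∨ V - U = 0 := by decide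
  rcases hdep (modReduce 2 u) (modReduce 2 v)
    (by rw [cross_modReduce, ZMod.intCast_eq_zero_iff_even]; exact h) with hu | hv | huv
  · exact Or.inl (modReduce_eq_zero_iff.1 hu)
  · exact Or.inr (Or.inl (modReduce_eq_zero_iff.1 hv))
  · rw [← map_sub, modReduce_eq_zero_iff] at huv
    obtain ⟨a, ha⟩ := huv
    exact Or.inr (Or.inr ⟨a, by rw [← ha]; abel⟩)

def LatticeConvex (L : Set (ℤ × ℤ)) : Prop :=
  ∀ w, latticeEmb w ∈ convexHull ℝ (latticeEmb '' L) → w ∈ L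

def ParityIsolated (L : Set (ℤ × ℤ)) (p₀ : ℤ × ℤ) : Prop :=
  ∀ d, p₀ + 2 • d ∈ L → d = 0

def WidthAtLeast (L : Set (ℤ × ℤ)) (m : ℤ) : Prop :=
  ∀ e : ℤ × ℤ, IsCoprime e.1 e.2 → ∃ z₁ ∈ L, ∃ z₂ ∈ L, m ≤ cross e z₁ - cross e z₂

lemma _root_.Convex.latticeConvex_preimage {K : Set (ℝ × ℝ)} (hK : Convex ℝ K) :
    LatticeConvex (latticeEmb ⁻¹' K) :=
  fun _ hw => convexHull_min (Set.image_preimage_subset _ _) hK hw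

lemma parityIsolated_of_visible {P : Set (ℝ × ℝ)} {p : ℤ × ℤ}
    (hvis : ∀ q : ℤ × ℤ, latticeEmb q ∈ P → q ≠ p →
      ∀ r : ℤ × ℤ, latticeEmb r ∉ openSegment ℝ (latticeEmb p) (latticeEmb q)) :
    ParityIsolated (latticeEmb ⁻¹' P) p := by
  intro d hd
  by_contra hd0
  have hne : p + 2 • d ≠ p := fun h =>
    hd0 ((nsmul_right_inj two_ne_zero).1 ((add_eq_left.1 h).trans (smul_zero 2).symm))
  refine hvis _ hd hne (p + d) ⟨1 / 2, 1 / 2, by norm_num, by norm_num, by norm_num, ?_⟩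
  ext <;> simp [latticeEmb] <;> ring

variable {L : Set (ℤ × ℤ)} {p₀ : ℤ × ℤ}

lemma LatticeConvex.mem_of_smul_eq_add_add (hL : LatticeConvex L) {a b c w : ℤ × ℤ}
    (ha : a ∈ L) (hb : b ∈ L) (hc : c ∈ L) {i j k : ℤ} (hi : 0 ≤ i) (hj : 0 ≤ j) (hk : 0 ≤ k)
    (hn : 0 < i + j + k) (h : (i + j + k) • w = i • a + j • b + k • c) : w ∈ L := by
  apply hL
  have hn' : (0 : ℝ) < i + j + k := by exact_mod_cast hn
  have hw : latticeEmb w = (Finset.univ : Finset (Fin 3)).centerMass (fun l => (![i, j, k] l : ℝ))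
      (fun l => latticeEmb (![a, b, c] l)) := by
    have h1 := congrArg (fun v : ℤ × ℤ => ((v.1 : ℤ) : ℝ)) h
    have h2 := congrArg (fun v : ℤ × ℤ => ((v.2 : ℤ) : ℝ)) h
    simp only [Prod.fst_add, Prod.snd_add, Prod.smul_fst, Prod.smul_snd, smul_eq_mul,
      Int.cast_add, Int.cast_mul] at h1 h2
    simp only [Finset.centerMass, Fin.sum_univ_three, latticeEmb, Matrix.cons_val_zero,
      Matrix.cons_val_one, Matrix.cons_val_two, Matrix.head_cons, Matrix.tail_cons]
    ext <;> simp only [Prod.smul_fst, Prod.smul_snd, Prod.fst_add, Prod.snd_add, smul_eq_mul] <;>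
      field_simp <;> linarith
  rw [hw]
  refine Finset.centerMass_mem_convexHull _ (fun l _ => ?_) (by simpa [Fin.sum_univ_three])
    (fun l _ => Set.mem_image_of_mem _ ?_)
  · fin_cases l <;> simpa
  · fin_cases l <;> simpa

lemma LatticeConvex.mem_of_smul_eq_add (hL : LatticeConvex L) {a b w : ℤ × ℤ}
    (ha : a ∈ L) (hb : b ∈ L) {i j : ℤ} (hi : 0 ≤ i) (hj : 0 ≤ j) (hn : 0 < i + j)
    (h : (i + j) • w = i • a + j • b) : w ∈ L :=
  hL.mem_of_smul_eq_add_add ha hb hb hi hj le_rfl (by simpa) (by simpa using h)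

lemma ParityIsolated.eq_zero_of_mem (hp₀ : ParityIsolated L p₀) {a v d : ℤ × ℤ} (ha : a ∈ L)
    (hav : a + 2 • v ∈ L) (hd : a = p₀ + 2 • d) : v = 0 := by
  subst hd
  obtain rfl := hp₀ d ha
  exact hp₀ v (by simpa using hav)

lemma LatticeConvex.exists_four_consecutive (hL : LatticeConvex L) {p e z : ℤ × ℤ}
    (he : IsCoprime e.1 e.2) (hp : p ∈ L) (hp8 : p + 8 • e ∈ L) (hz : z ∈ L)
    (ht : 2 ≤ cross e (z - p)) :
    ∃ q, cross e (q - p) = 1 ∧ ∀ i : ℤ, 0 ≤ i → i ≤ 3 → q + i • e ∈ L := by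
  obtain ⟨w, hw⟩ := exists_cross_eq_one he
  set t := cross e (z - p)
  obtain ⟨γ, hγ⟩ := exists_eq_smul_of_cross_eq_zero he (d := z - p - t • w)
    (by rw [cross_sub_right, cross_smul_right, hw, mul_one, sub_self])
  have hmod := Int.emod_nonneg γ (by omega : t ≠ 0)
  have hmod' := Int.emod_lt_of_pos γ (by omega : 0 < t)
  have hdiv := Int.mul_ediv_add_emod γ t
  refine ⟨p + w + (γ / t + 1) • e, ?_, fun i hi0 hi3 => ?_⟩
  · simp only [cross_sub_right, cross_add_right, cross_smul_right, cross_self, hw]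
    ring
  -- weights `8t - 8 - N`, `N`, `8` on `p`, `p + 8e`, `z`, where `N = t(γ/t + 1 + i) - γ ∈ [1, 4t]`
  set N := t * (γ / t + 1 + i) - γ
  have hN : 1 ≤ N ∧ N ≤ 4 * t := by constructor <;> nlinarith
  refine hL.mem_of_smul_eq_add_add hp hp8 hz (i := 8 * t - 8 - N) (j := N) (k := 8)
    (by omega) (by omega) (by norm_num) (by omega) ?_
  have hz' : z = p + t • w + γ • e := by rw [← hγ]; abel
  rw [hz']
  simp only [N]
  module

lemma ParityIsolated.cross_sub_eq_zero (hp₀ : ParityIsolated L p₀) {p q e : ℤ × ℤ} (hp : p ∈ L)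
    (hpe : p + e ∈ L) (hq : ∀ i : ℤ, 0 ≤ i → i ≤ 3 → q + i • e ∈ L) (hpq : cross e (q - p) = 1) :
    cross e (p₀ - p) = 0 := by
  obtain ⟨σ, τ, hσ, hτ, d, hd⟩ :=
    exists_eq_add_two_smul_of_odd_cross (hpq ▸ odd_one) (p₀ - p)
  rcases hτ with rfl | rfl
  · have hσe : p + σ • e ∈ L := by rcases hσ with rfl | rfl <;> simpa
    have hd0 : d = 0 := neg_eq_zero.1 <|
      hp₀ (-d) (by convert hσe using 1; linear_combination (norm := module) hd)
    rw [hd, hd0]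
    simp only [zero_smul, smul_zero, add_zero, cross_smul_right, cross_self, mul_zero]
  · have he : e = 0 := hp₀.eq_zero_of_mem (hq σ (by omega) (by omega))
      (by convert hq (σ + 2) (by omega) (by omega) using 1; module)
      (d := -d) (by linear_combination (norm := module) -hd)
    simp [he, cross] at hpq

lemma ParityIsolated.cross_sub_ne_zero (hp₀ : ParityIsolated L p₀) {p e : ℤ × ℤ}
    (he : IsCoprime e.1 e.2) (hline : ∀ j : ℤ, 0 ≤ j → j ≤ 3 → p + j • e ∈ L) :
    cross e (p₀ - p) ≠ 0 := by
  intro hon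
  obtain ⟨j₀, hj₀⟩ := exists_eq_smul_of_cross_eq_zero he hon
  have hr := Int.emod_nonneg j₀ two_ne_zero
  have hr' := Int.emod_lt_of_pos j₀ two_pos
  have hj₀' : p₀ = p + (2 * (j₀ / 2) + j₀ % 2) • e := by
    rw [Int.mul_ediv_add_emod]
    exact sub_eq_iff_eq_add'.1 hj₀
  have he0 : e = 0 := hp₀.eq_zero_of_mem (hline (j₀ % 2) hr (by omega))
    (by convert hline (j₀ % 2 + 2) (by omega) (by omega) using 1; module)
    (d := -(j₀ / 2) • e) (by rw [hj₀']; module)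
  exact not_isUnit_zero (isCoprime_zero_left.1 (he0 ▸ he))

lemma not_forall_mem_add_smul (hL : LatticeConvex L) (hp₀ : ParityIsolated L p₀)
    (hw : WidthAtLeast L 3) {p e : ℤ × ℤ} (he : IsCoprime e.1 e.2) :
    ¬ ∀ j : ℤ, 0 ≤ j → j ≤ 8 → p + j • e ∈ L := by
  intro hline
  have hp : p ∈ L := by simpa using hline 0 le_rfl (by norm_num)
  have hp8 : p + 8 • e ∈ L := by simpa using hline 8 (by norm_num) le_rfl
  have hoff := hp₀.cross_sub_ne_zero he fun j hj0 hj3 => hline j hj0 (by omega)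
  obtain ⟨z₁, hz₁, z₂, hz₂, hz⟩ := hw e he
  rcases le_or_gt 2 (cross e (z₁ - p)) with h | h
  · obtain ⟨q, hq, hqL⟩ := hL.exists_four_consecutive he hp hp8 hz₁ h
    exact hoff (hp₀.cross_sub_eq_zero hp (by simpa using hline 1 zero_le_one (by norm_num)) hqL hq)
  · -- `z₂` is far on the other side: restart from `p + 8e` in direction `-e`
    obtain ⟨q, hq, hqL⟩ := hL.exists_four_consecutive (e := -e) he.neg_neg hp8
      (by convert hp using 1; module) hz₂ (by simp only [cross_neg_left, cross_sub_right,
        cross_add_right, cross_nsmul_right, cross_self]; linarith [cross_sub_right e z₁ p])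
    have := hp₀.cross_sub_eq_zero hp8
      (by convert hline 7 (by norm_num) (by norm_num) using 1; module) hqL hq
    simp only [cross_neg_left, cross_sub_right, cross_add_right, cross_nsmul_right,
      cross_self] at this
    exact hoff (by rw [cross_sub_right]; linarith)

lemma eq_zero_of_mem_of_add_eight_smul_mem (hL : LatticeConvex L) (hp₀ : ParityIsolated L p₀)
    (hw : WidthAtLeast L 3) {u v : ℤ × ℤ} (hu : u ∈ L) (hv : u + 8 • v ∈ L) : v = 0 := by
  by_contra hv0
  obtain ⟨g, hg, e, he, rfl⟩ := exists_pos_smul_isCoprime_eq hv0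
  refine not_forall_mem_add_smul hL hp₀ hw he (p := u) fun j hj0 hj8 => ?_
  exact hL.mem_of_smul_eq_add hu hv (i := 8 * g - j) (j := j) (by nlinarith) hj0 (by omega)
    (by module)

lemma eq_or_eq_or_eq_of_modReduce_four_eq (hL : LatticeConvex L) (hp₀ : ParityIsolated L p₀)
    (hw : WidthAtLeast L 3) {x y z : ℤ × ℤ} (hx : x ∈ L) (hy : y ∈ L) (hz : z ∈ L)
    (hxy : modReduce 4 y = modReduce 4 x) (hxz : modReduce 4 z = modReduce 4 x) :
    x = y ∨ x = z ∨ y = z := by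
  obtain ⟨h, rfl⟩ : ∃ h, y = x + 4 • h := by
    obtain ⟨h, hh⟩ :=
      modReduce_eq_zero_iff.1 (by rw [map_sub, hxy, sub_self] : modReduce 4 (y - x) = 0)
    exact ⟨h, by rw [← hh]; abel⟩
  obtain ⟨k, rfl⟩ : ∃ k, z = x + 4 • k := by
    obtain ⟨k, hk⟩ :=
      modReduce_eq_zero_iff.1 (by rw [map_sub, hxz, sub_self] : modReduce 4 (z - x) = 0)
    exact ⟨k, by rw [← hk]; abel⟩
  have eight {u v : ℤ × ℤ} (hu : u ∈ L) (hv : u + 8 • v ∈ L) : v = 0 :=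
    eq_zero_of_mem_of_add_eight_smul_mem hL hp₀ hw hu hv
  rcases Int.even_or_odd (cross h k) with heven | hodd
  · rcases exists_eq_two_smul_of_even_cross heven with ⟨a, rfl⟩ | ⟨a, rfl⟩ | ⟨a, rfl⟩
    · left
      rw [eight (v := a) hx (by convert hy using 1; module)]
      simp
    · right; left
      rw [eight (v := a) hx (by convert hz using 1; module)]
      simp
    · right; right
      rw [eight (v := a) hy (by convert hz using 1; module)]
      simp
  · -- `h, k` span `(ℤ/2)²`, so the points `x + s h + τ k` (`0 ≤ s ≤ 3`) of the triangle
    -- contain two points `≡ p₀ (mod 2)`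
    obtain ⟨σ, τ, hσ, hτ, d, hd⟩ := exists_eq_add_two_smul_of_odd_cross hodd (p₀ - x)
    have grid : ∀ s : ℤ, 0 ≤ s → s ≤ 3 → x + s • h + τ • k ∈ L := fun s hs0 hs3 =>
      hL.mem_of_smul_eq_add_add hx hy hz (i := 4 - s - τ) (j := s) (k := τ) (by omega) hs0
        (by omega) (by omega) (by module)
    left
    rw [hp₀.eq_zero_of_mem (v := h) (grid σ (by omega) (by omega))
      (by convert grid (σ + 2) (by omega) (by omega) using 1; module) (d := -d)
      (by linear_combination (norm := module) -hd)]
    simp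

lemma add_eq_two_smul_of_modReduce_eq_neg (hL : LatticeConvex L) (hp₀ : ParityIsolated L p₀)
    {x z : ℤ × ℤ} (hx : x ∈ L) (hz : z ∈ L)
    (h : modReduce 4 (z - p₀) = -modReduce 4 (x - p₀)) : x + z = 2 • p₀ := by
  obtain ⟨d, hd⟩ := modReduce_eq_zero_iff.1 (show modReduce 4 (x + z - 2 • p₀) = 0 by
    rw [show x + z - 2 • p₀ = (x - p₀) + (z - p₀) by abel, map_add, h, add_neg_cancel])
  have hd0 : d = 0 := hp₀ d (hL.mem_of_smul_eq_add hx hz (i := 1) (j := 1) zero_le_one zero_le_one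
    (by norm_num) (by linear_combination (norm := module) -hd))
  rw [← sub_eq_zero, hd, hd0, smul_zero]

lemma eq_or_eq_or_eq_of_modReduce_sub_eq_or_eq_neg (hL : LatticeConvex L)
    (hp₀ : ParityIsolated L p₀) (hw : WidthAtLeast L 3) {x y z : ℤ × ℤ}
    (hx : x ∈ L) (hy : y ∈ L) (hz : z ∈ L)
    (hcy : modReduce 4 (y - p₀) = modReduce 4 (x - p₀) ∨
      modReduce 4 (y - p₀) = -modReduce 4 (x - p₀))
    (hcz : modReduce 4 (z - p₀) = modReduce 4 (x - p₀) ∨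
      modReduce 4 (z - p₀) = -modReduce 4 (x - p₀)) :
    x = y ∨ x = z ∨ y = z := by
  have sym {a b : ℤ × ℤ} (ha : a ∈ L) (hb : b ∈ L) :=
    add_eq_two_smul_of_modReduce_eq_neg hL hp₀ ha hb
  rcases hcy with hcy | hcy <;> rcases hcz with hcz | hcz
  · simp only [map_sub, sub_left_inj] at hcy hcz
    exact eq_or_eq_or_eq_of_modReduce_four_eq hL hp₀ hw hx hy hz hcy hcz
  · exact Or.inl (add_right_cancel ((sym hx hz hcz).trans (sym hy hz (by rw [hcz, hcy])).symm))
  · exact Or.inr (Or.inl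
      (add_right_cancel ((sym hx hy hcy).trans (sym hz hy (by rw [hcy, hcz])).symm)))
  · exact Or.inr (Or.inr (add_left_cancel ((sym hx hy hcy).trans (sym hx hz hcz).symm)))

lemma ParityIsolated.two_nsmul_modReduce_sub_ne_zero (hp₀ : ParityIsolated L p₀) {q : ℤ × ℤ}
    (hq : q ∈ L) (hqp : q ≠ p₀) : 2 • modReduce 4 (q - p₀) ≠ 0 := by
  rw [← map_nsmul, Ne, modReduce_eq_zero_iff]
  rintro ⟨d, hd⟩
  have hd' : q = p₀ + 2 • d := by
    rw [← sub_eq_iff_eq_add', ← nsmul_right_inj two_ne_zero, hd]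
    module
  exact hqp (by rw [hd', hp₀ d (hd' ▸ hq), smul_zero, add_zero])

lemma card_le_thirteen (hL : LatticeConvex L) (hp₀ : ParityIsolated L p₀)
    (hw : WidthAtLeast L 3) (F : Finset (ℤ × ℤ)) (hF : ↑F ⊆ L) : F.card ≤ 13 := by
  classical
  let c : ℤ × ℤ → ZMod 4 × ZMod 4 := fun q => modReduce 4 (q - p₀)
  let pair : ZMod 4 × ZMod 4 → Finset (ZMod 4 × ZMod 4) := fun κ => {κ, -κ}
  let pairs := (Finset.univ.filter fun κ : ZMod 4 × ZMod 4 => 2 • κ ≠ 0).image pair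
  have hpairs : pairs.card = 6 := by decide
  have himage : (F.erase p₀).image (fun q => pair (c q)) ⊆ pairs := by
    refine Finset.image_subset_iff.2 fun q hq => Finset.mem_image_of_mem pair ?_
    obtain ⟨hqp, hqF⟩ := Finset.mem_erase.1 hq
    exact Finset.mem_filter.2
      ⟨Finset.mem_univ _, hp₀.two_nsmul_modReduce_sub_ne_zero (hF hqF) hqp⟩
  have hfiber : ∀ b ∈ (F.erase p₀).image (fun q => pair (c q)),
      ((F.erase p₀).filter fun q => pair (c q) = b).card ≤ 2 := by
    intro b _
    by_contra! h
    obtain ⟨x, hx, y, hy, z, hz, hxy, hxz, hyz⟩ := Finset.two_lt_card.1 h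
    simp only [Finset.mem_filter, Finset.mem_erase] at hx hy hz
    have hsame {q : ℤ × ℤ} (hq : pair (c q) = pair (c x)) : c q = c x ∨ c q = -c x := by
      have hmem : c q ∈ pair (c x) := hq ▸ Finset.mem_insert_self _ _
      simpa [pair] using hmem
    rcases eq_or_eq_or_eq_of_modReduce_sub_eq_or_eq_neg hL hp₀ hw (hF hx.1.2) (hF hy.1.2)
      (hF hz.1.2) (hsame (hy.2.trans hx.2.symm)) (hsame (hz.2.trans hx.2.symm)) with h | h | h
    exacts [hxy h, hxz h, hyz h]
  calc F.card ≤ (F.erase p₀).card + 1 := by have := F.pred_card_le_card_erase (a := p₀); omega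
    _ ≤ 2 * ((F.erase p₀).image fun q => pair (c q)).card + 1 := by
      gcongr; exact Finset.card_le_mul_card_image _ 2 hfiber
    _ ≤ 2 * pairs.card + 1 := by gcongr
    _ = 13 := by rw [hpairs]

end Panoptigon

open Panoptigon

theorem panoptigon_lw3_card_le_13_general (S : Finset (ℤ × ℤ))
    (P : Set (ℝ × ℝ)) (hP : P = convexHull ℝ (latticeEmb '' (S : Set (ℤ × ℤ))))
    -- P is a panoptigon with panoptigon point p
    (hpan : ∃ p : ℤ × ℤ, latticeEmb p ∈ P ∧ ∀ q : ℤ × ℤ, latticeEmb q ∈ P → q ≠ p →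
      ∀ r : ℤ × ℤ, latticeEmb r ∉ openSegment ℝ (latticeEmb p) (latticeEmb q))
    -- the lattice width of P is at least 3: in every primitive direction the width is ≥ 3
    (hlw : ∀ a b : ℤ, Int.gcd a b = 1 →
      ∃ p ∈ S, ∃ q ∈ S, (a * p.2 - b * p.1) - (a * q.2 - b * q.1) ≥ 3) :
    Set.ncard {q : ℤ × ℤ | latticeEmb q ∈ P} ≤ 13 := by
  obtain ⟨p₀, -, hvis⟩ := hpan
  have hSP : ∀ s ∈ S, latticeEmb s ∈ P := fun s hs =>
    hP ▸ subset_convexHull ℝ _ (Set.mem_image_of_mem _ hs)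
  have hL : LatticeConvex (latticeEmb ⁻¹' P) :=
    (hP ▸ convex_convexHull ℝ _ : Convex ℝ P).latticeConvex_preimage
  have hw : WidthAtLeast (latticeEmb ⁻¹' P) 3 := fun e he => by
    obtain ⟨z₁, hz₁, z₂, hz₂, h⟩ := hlw e.1 e.2 (Int.isCoprime_iff_gcd_eq_one.1 he)
    exact ⟨z₁, hSP z₁ hz₁, z₂, hSP z₂ hz₂, h⟩
  exact Set.ncard_le_of_forall_finset_subset
    (card_le_thirteen hL (parityIsolated_of_visible hvis) hw)

/-- A panoptigon of lattice width at least 3 has at most 13 lattice points. -/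
theorem panoptigon_lw3_card_le_13 (S : Finset (ℤ × ℤ)) (hS : S.Nonempty)
    (P : Set (ℝ × ℝ)) (hP : P = convexHull ℝ (latticeEmb '' (S : Set (ℤ × ℤ))))
    -- P is a panoptigon with panoptigon point p
    (hpan : ∃ p : ℤ × ℤ, latticeEmb p ∈ P ∧ ∀ q : ℤ × ℤ, latticeEmb q ∈ P → q ≠ p →
      ∀ r : ℤ × ℤ, latticeEmb r ∉ openSegment ℝ (latticeEmb p) (latticeEmb q))
    -- the lattice width of P is at least 3: in every primitive direction the width is ≥ 3
    (hlw : ∀ a b : ℤ, Int.gcd a b = 1 →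
      ∃ p ∈ S, ∃ q ∈ S, (a * p.2 - b * p.1) - (a * q.2 - b * q.1) ≥ 3) :
    Set.ncard {q : ℤ × ℤ | latticeEmb q ∈ P} ≤ 13 :=
  panoptigon_lw3_card_le_13_general S P hP hpan hlw
end

section
/- A panoptigon of lattice diameter at least 7 is hyperelliptic: if P is a convex lattice polygon with a panoptigon point and P contains 8 collinear lattice points, then, after a suitable unimodular transformation placing the panoptigon point at the origin and the 8 collinear points on the line y = -1, all lattice points of P lie at heights 0, -1, or -2. -/
/-!
Let `A = (a, -1)` and `B = (a + 7, -1)`, and let `(x, y)` be a lattice point of `P`.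
If `y ≤ -3`, the triangle `A B (x, y)` cuts the line `y = -2` in a segment of length
`7 (y + 2) / (y + 1) ≥ 2`, which contains a point `(m, -2)` with `m` even; it is not visible.
If `y ≥ 1`, the triangle cuts the line `y = 0` in a segment of length `7 y / (y + 1) ≥ 7 / 2`
whose endpoints lie in `(y + 1)⁻¹ ℤ`; such a segment cannot avoid both `(-2, 0)` and `(2, 0)`,
while `(-1, 0)`, `(0, 0)`, `(1, 0)` are the only visible lattice points on that line.
-/

open Set

def LatticeVisible (P : Set (ℝ × ℝ)) : Prop :=
  ∀ x y : ℤ, ((x : ℝ), (y : ℝ)) ∈ P → (x = 0 ∧ y = 0) ∨ Int.gcd x y = 1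

namespace LatticeVisible

variable {P : Set (ℝ × ℝ)}

theorem abs_le_one_of_mem_height_zero (hP : LatticeVisible P) {m : ℤ}
    (hm : ((m : ℝ), (0 : ℝ)) ∈ P) : |m| ≤ 1 := by
  rcases hP m 0 (by exact_mod_cast hm) with ⟨rfl, -⟩ | h
  · simp
  · rw [Int.gcd_zero_right] at h
    rw [Int.abs_eq_natAbs, h]
    rfl

theorem odd_of_mem_height_neg_two (hP : LatticeVisible P) {m : ℤ}
    (hm : ((m : ℝ), (-2 : ℝ)) ∈ P) : Odd m := by
  rcases hP m (-2) (by exact_mod_cast hm) with ⟨-, h⟩ | h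
  · omega
  · rw [← Int.not_even_iff_odd]
    rintro ⟨k, rfl⟩
    have : (2 : ℤ) ∣ Int.gcd (k + k) (-2) := Int.dvd_coe_gcd ⟨k, by ring⟩ ⟨-1, by ring⟩
    omega

end LatticeVisible

namespace Convex

variable {P : Set (ℝ × ℝ)}

theorem mk_mem_of_le_of_le (hP : Convex ℝ P) {u v r h : ℝ} (hu : (u, h) ∈ P) (hv : (v, h) ∈ P)
    (hur : u ≤ r) (hrv : r ≤ v) : (r, h) ∈ P := by
  apply hP.segment_subset hu hv
  rw [← Prod.image_mk_segment_left, segment_eq_Icc (hur.trans hrv)]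
  exact mem_image_of_mem _ ⟨hur, hrv⟩

/-- The intersection of the segment from `(u₁, u₂)` to `(v₁, v₂)` with the line `y = h`. -/
theorem crossing_mem (hP : Convex ℝ P) {u₁ u₂ v₁ v₂ h : ℝ} (hu : (u₁, u₂) ∈ P)
    (hv : (v₁, v₂) ∈ P) (huh : u₂ ≤ h) (hhv : h ≤ v₂) (huv : u₂ < v₂) :
    ((u₁ * (v₂ - h) + v₁ * (h - u₂)) / (v₂ - u₂), h) ∈ P := by
  have hd : 0 < v₂ - u₂ := sub_pos.mpr huv
  have hmem := hP hu hv (div_nonneg (sub_nonneg.mpr hhv) hd.le)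
    (div_nonneg (sub_nonneg.mpr huh) hd.le) (by field_simp; ring)
  convert hmem using 1
  ext
  · simp only [Prod.smul_mk, Prod.mk_add_mk, smul_eq_mul]
    field_simp
  · simp only [Prod.smul_mk, Prod.mk_add_mk, smul_eq_mul]
    field_simp
    ring

end Convex

theorem Int.exists_even_mem_Icc {u v : ℝ} (h : 2 ≤ v - u) : ∃ m : ℤ, Even m ∧ u ≤ m ∧ m ≤ v := by
  refine ⟨2 * ⌈u / 2⌉, even_two_mul _, ?_, ?_⟩ <;> push_cast
  · linarith [Int.le_ceil (u / 2)]
  · linarith [Int.ceil_lt_add_one (u / 2)]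

theorem neg_two_lt_and_lt_two_of_forall_int_mem_Icc {u v : ℝ} (h : 1 ≤ v - u)
    (hint : ∀ m : ℤ, u ≤ m → m ≤ v → |m| ≤ 1) : -2 < u ∧ v < 2 := by
  have hceil := abs_le.mp (hint ⌈u⌉ (Int.le_ceil u) (by linarith [Int.ceil_lt_add_one u]))
  have hfloor := abs_le.mp (hint ⌊v⌋ (by linarith [Int.lt_floor_add_one v]) (Int.floor_le v))
  have : (-1 : ℝ) ≤ ⌈u⌉ := by exact_mod_cast hceil.1
  have : (⌊v⌋ : ℝ) ≤ 1 := by exact_mod_cast hfloor.2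
  constructor <;> linarith [Int.ceil_lt_add_one u, Int.lt_floor_add_one v]

section Heights

variable {P : Set (ℝ × ℝ)} (hP : Convex ℝ P) (hvis : LatticeVisible P) {a : ℤ}
  (hA : ((a : ℝ), (-1 : ℝ)) ∈ P) (hB : ((a : ℝ) + 7, (-1 : ℝ)) ∈ P)
include hP hvis hA hB

theorem neg_two_le_of_mem {x y : ℤ} (hxy : ((x : ℝ), (y : ℝ)) ∈ P) : -2 ≤ y := by
  by_contra! hy
  have hy : (y : ℝ) ≤ -3 := by exact_mod_cast (show y ≤ -3 by omega)
  have cross {c : ℝ} (hc : (c, (-1 : ℝ)) ∈ P) :=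
    hP.crossing_mem (h := -2) hxy hc (by linarith) (by norm_num) (by linarith)
  have hlong : 2 ≤ ((x : ℝ) * (-1 - -2) + ((a : ℝ) + 7) * (-2 - y)) / (-1 - y)
      - ((x : ℝ) * (-1 - -2) + (a : ℝ) * (-2 - y)) / (-1 - y) := by
    rw [← sub_div, le_div_iff₀ (by linarith)]
    linarith
  obtain ⟨m, hm, hlo, hhi⟩ := Int.exists_even_mem_Icc hlong
  exact Int.not_even_iff_odd.mpr
    (hvis.odd_of_mem_height_neg_two (hP.mk_mem_of_le_of_le (cross hA) (cross hB) hlo hhi)) hm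

theorem le_zero_of_mem {x y : ℤ} (hxy : ((x : ℝ), (y : ℝ)) ∈ P) : y ≤ 0 := by
  by_contra! hy
  have hy : (1 : ℝ) ≤ y := by exact_mod_cast hy
  have cross {c : ℝ} (hc : (c, (-1 : ℝ)) ∈ P) :=
    hP.crossing_mem (h := 0) hc hxy (by norm_num) (by linarith) (by linarith)
  have hpos : (0 : ℝ) < y - -1 := by linarith
  obtain ⟨hlo, hhi⟩ := neg_two_lt_and_lt_two_of_forall_int_mem_Icc
    (by rw [← sub_div, le_div_iff₀ hpos]; linarith)
    fun m hlo hhi ↦ hvis.abs_le_one_of_mem_height_zero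
      (hP.mk_mem_of_le_of_le (cross hA) (cross hB) hlo hhi)
  rw [lt_div_iff₀ hpos] at hlo
  rw [div_lt_iff₀ hpos] at hhi
  have hlo : -2 * (y + 1) < a * y + x := by
    exact_mod_cast (by linarith : (-2 : ℝ) * (y + 1) < a * y + x)
  have hhi : a * y + x + 7 * y < 2 * (y + 1) := by
    exact_mod_cast (by linarith : (a * y + x + 7 * y : ℝ) < 2 * (y + 1))
  omega

end Heights

theorem long_diameter_hyperelliptic_general (P : Set (ℝ × ℝ)) (hconv : Convex ℝ P)
    (hvis : ∀ x y : ℤ, ((x : ℝ), (y : ℝ)) ∈ P → (x = 0 ∧ y = 0) ∨ Int.gcd x y = 1)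
    (a : ℤ)
    (height : ∀ i : ℤ, 0 ≤ i → i ≤ 7 → (((a : ℝ) + (i : ℝ)), (-1 : ℝ)) ∈ P) :
    ∀ x y : ℤ, ((x : ℝ), (y : ℝ)) ∈ P → -2 ≤ y ∧ y ≤ 0 := by
  have hA := height 0 le_rfl (by norm_num)
  have hB := height 7 (by norm_num) le_rfl
  push_cast at hA hB
  rw [add_zero] at hA
  exact fun x y hxy ↦ ⟨neg_two_le_of_mem hconv hvis hA hB hxy, le_zero_of_mem hconv hvis hA hB hxy⟩

/-- If `P` is a convex set containing the origin whose lattice points are all visible from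
the origin, and `P` contains 8 consecutive lattice points `(a,-1),...,(a+7,-1)` at height
`-1`, then every lattice point of `P` has height between `-2` and `0`: `P` is hyperelliptic. -/
theorem long_diameter_hyperelliptic (P : Set (ℝ × ℝ)) (hconv : Convex ℝ P)
    (h0 : ((0 : ℝ), (0 : ℝ)) ∈ P)
    (hvis : ∀ x y : ℤ, ((x : ℝ), (y : ℝ)) ∈ P → (x = 0 ∧ y = 0) ∨ Int.gcd x y = 1)
    (a : ℤ)
    (height : ∀ i : ℤ, 0 ≤ i → i ≤ 7 → (((a : ℝ) + (i : ℝ)), (-1 : ℝ)) ∈ P) :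
    ∀ x y : ℤ, ((x : ℝ), (y : ℝ)) ∈ P → -2 ≤ y ∧ y ≤ 0 :=
  long_diameter_hyperelliptic_general P hconv hvis a height
end

section
/- Let P be a convex set containing the origin and eight consecutive lattice points at height -1, all of whose lattice points are visible from the origin. Then P contains no lattice point (x,y) with y ≥ 2. -/
/-!
If `(x, y) ∈ P` with `y ≥ 2`, the segments from `(x, y)` to `(a, -1)` and to `(a + 7, -1)` cross
the line `y = 0` at two points of `P` at distance `7y / (y + 1) ≥ 14 / 3` apart. By convexity the
segment between them lies in `P` and contains four consecutive integers, whereas the only lattice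
points of the line `y = 0` that are visible from the origin (or are the origin) are `-1, 0, 1`.
-/

open Set

theorem Convex.ordConnected_horizontal_slice {P : Set (ℝ × ℝ)} (hP : Convex ℝ P) (h : ℝ) :
    {u : ℝ | (u, h) ∈ P}.OrdConnected := by
  refine Convex.ordConnected ?_
  simpa [Set.preimage, AffineMap.lineMap_apply] using
    hP.affine_preimage (AffineMap.lineMap (0, h) (1, h))

theorem Convex.mem_of_height_neg_one_of_mem {P : Set (ℝ × ℝ)} (hP : Convex ℝ P) {p x y : ℝ}
    (hp : (p, -1) ∈ P) (hxy : (x, y) ∈ P) (hy : 0 ≤ y) :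
    ((y * p + x) / (y + 1), (0 : ℝ)) ∈ P := by
  have hy1 : 0 < y + 1 := by linarith
  convert hP hp hxy (by positivity : 0 ≤ y / (y + 1)) (by positivity : 0 ≤ 1 / (y + 1))
    (by field_simp) using 1
  ext <;> simp only [Prod.smul_mk, Prod.fst_add, Prod.snd_add, smul_eq_mul] <;> field_simp
  ring

theorem exists_int_add_mem_Icc {c d : ℝ} {n : ℕ} (hcd : c + n + 1 ≤ d) :
    ∃ m : ℤ, ∀ k : ℕ, k ≤ n → ((m + k : ℤ) : ℝ) ∈ Icc c d := by
  refine ⟨⌈c⌉, fun k hk => ⟨?_, ?_⟩⟩ <;> push_cast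
  · linarith [Int.le_ceil c, (Nat.cast_nonneg k : (0 : ℝ) ≤ k)]
  · linarith [Int.ceil_lt_add_one c, (Nat.cast_le.mpr hk : (k : ℝ) ≤ n)]

theorem natAbs_le_one_of_mem_of_visible {P : Set (ℝ × ℝ)}
    (hvis : ∀ x y : ℤ, ((x : ℝ), (y : ℝ)) ∈ P → (x = 0 ∧ y = 0) ∨ Int.gcd x y = 1)
    {n : ℤ} (hn : ((n : ℝ), (0 : ℝ)) ∈ P) : n.natAbs ≤ 1 := by
  rcases hvis n 0 (by exact_mod_cast hn) with ⟨rfl, -⟩ | hgcd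
  · simp
  · simp at hgcd
    omega

theorem no_lattice_point_height_ge_two_general (P : Set (ℝ × ℝ)) (hconv : Convex ℝ P)
    (hvis : ∀ x y : ℤ, ((x : ℝ), (y : ℝ)) ∈ P → (x = 0 ∧ y = 0) ∨ Int.gcd x y = 1)
    (a : ℤ)
    (height : ∀ i : ℤ, 0 ≤ i → i ≤ 7 → (((a : ℝ) + (i : ℝ)), (-1 : ℝ)) ∈ P) :
    ∀ x y : ℤ, ((x : ℝ), (y : ℝ)) ∈ P → y < 2 := by
  intro x y hxy
  by_contra! hy
  replace hy : (2 : ℝ) ≤ y := by exact_mod_cast hy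
  set c := ((y : ℝ) * a + x) / (y + 1)
  set d := ((y : ℝ) * (a + 7) + x) / (y + 1)
  have hc : (c, (0 : ℝ)) ∈ P :=
    hconv.mem_of_height_neg_one_of_mem (by simpa using height 0 le_rfl (by norm_num)) hxy
      (by linarith)
  have hd : (d, (0 : ℝ)) ∈ P :=
    hconv.mem_of_height_neg_one_of_mem (by simpa using height 7 (by norm_num) le_rfl) hxy
      (by linarith)
  have hcd : c + (3 : ℕ) + 1 ≤ d := by
    rw [show d = c + 7 * y / (y + 1) by simp only [c, d]; field_simp; ring]
    have h4 : (4 : ℝ) ≤ 7 * y / (y + 1) := by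
      rw [le_div_iff₀ (by linarith)]
      linarith
    push_cast
    linarith
  obtain ⟨m, hm⟩ := exists_int_add_mem_Icc hcd
  have hsmall (k : ℕ) (hk : k ≤ 3) : (m + k).natAbs ≤ 1 :=
    natAbs_le_one_of_mem_of_visible hvis
      ((hconv.ordConnected_horizontal_slice 0).out hc hd (hm k hk))
  have := hsmall 0 (by norm_num)
  have := hsmall 1 (by norm_num)
  have := hsmall 2 (by norm_num)
  have := hsmall 3 le_rfl
  omega

/-- If `P` is a convex set containing the origin whose lattice points are all visible from
the origin, and `P` contains 8 consecutive lattice points at height `-1`, then `P` contains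
no lattice point at height `≥ 2`. -/
theorem no_lattice_point_height_ge_two (P : Set (ℝ × ℝ)) (hconv : Convex ℝ P)
    (h0 : ((0 : ℝ), (0 : ℝ)) ∈ P)
    (hvis : ∀ x y : ℤ, ((x : ℝ), (y : ℝ)) ∈ P → (x = 0 ∧ y = 0) ∨ Int.gcd x y = 1)
    (a : ℤ)
    (height : ∀ i : ℤ, 0 ≤ i → i ≤ 7 → (((a : ℝ) + (i : ℝ)), (-1 : ℝ)) ∈ P) :
    ∀ x y : ℤ, ((x : ℝ), (y : ℝ)) ∈ P → y < 2 :=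
  no_lattice_point_height_ge_two_general P hconv hvis a height
end

section
/- The number of maximal lattice polygons of genus g ≥ 4 with lattice width 3 is ⌊(g-2)/2⌋ − ⌊g/3⌋ + 1. Equivalently (purely arithmetic form): the number of integer pairs (a,b) with 1 ≤ a ≤ b, a + b = g, and 2a ≥ b − 2 equals ⌊(g−2)/2⌋ − ⌊g/3⌋ + 1 for every integer g ≥ 4. -/
/-- The number of maximal lattice polygons of genus `g ≥ 4` with lattice width 3,
in its arithmetic form: the number of integers `a` with `1 ≤ a`, `2a ≤ g - 2`, and
`3a > g - 3` equals `⌊(g-2)/2⌋ - ⌊g/3⌋ + 1`. -/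
theorem count_maximal_lw3 (g : ℤ) (hg : 4 ≤ g) :
    ({a : ℤ | 1 ≤ a ∧ 2 * a ≤ g - 2 ∧ g - 3 < 3 * a}.ncard : ℤ) =
      (g - 2) / 2 - g / 3 + 1 := by
  have hset : {a : ℤ | 1 ≤ a ∧ 2 * a ≤ g - 2 ∧ g - 3 < 3 * a}
      = ↑(Finset.Icc (g / 3) ((g - 2) / 2)) := by
    ext a
    simp only [Set.mem_setOf_eq, Finset.coe_Icc, Set.mem_Icc]
    omega
  rw [hset, Set.ncard_coe_finset, Int.card_Icc]
  have : (g - 2) / 2 + 1 - g / 3 ≥ 0 := by omega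
  omega
end

section
/- If G is a tropically planar big face graph arising from a regular unimodular triangulation of a lattice polygon P, then the interior polygon P_int (the convex hull of the interior lattice points of P) is a panoptigon. -/
/-- A primitive lattice segment contains no lattice point in its open part. -/
lemma primitive_no_interior (p q r : ℤ × ℤ)
    (hgcd : Int.gcd (q.1 - p.1) (q.2 - p.2) = 1) :
    latticeEmb r ∉ openSegment ℝ (latticeEmb p) (latticeEmb q) := by
  intro hr
  rw [openSegment_eq_image] at hr
  obtain ⟨t, ht, heq⟩ := hr
  obtain ⟨ht0, ht1⟩ := ht
  have h1 : (r.1 : ℝ) = (1 - t) * p.1 + t * q.1 := by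
    have := congrArg Prod.fst heq; simpa [latticeEmb, Prod.smul_def] using this.symm
  have h2 : (r.2 : ℝ) = (1 - t) * p.2 + t * q.2 := by
    have := congrArg Prod.snd heq; simpa [latticeEmb, Prod.smul_def] using this.symm
  have e1 : ((r.1 - p.1 : ℤ) : ℝ) = t * ((q.1 - p.1 : ℤ) : ℝ) := by
    push_cast; rw [h1]; ring
  have e2 : ((r.2 - p.2 : ℤ) : ℝ) = t * ((q.2 - p.2 : ℤ) : ℝ) := by
    push_cast; rw [h2]; ring
  set a := Int.gcdA (q.1 - p.1) (q.2 - p.2)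
  set b := Int.gcdB (q.1 - p.1) (q.2 - p.2)
  have hbez : (1 : ℤ) = (q.1 - p.1) * a + (q.2 - p.2) * b := by
    have := Int.gcd_eq_gcd_ab (q.1 - p.1) (q.2 - p.2)
    rw [hgcd] at this; exact_mod_cast this
  have htint : t = (((r.1 - p.1) * a + (r.2 - p.2) * b : ℤ) : ℝ) := by
    have : t = t * (((q.1 - p.1) * a + (q.2 - p.2) * b : ℤ) : ℝ) := by
      rw [← hbez]; push_cast; ring
    rw [this]; push_cast
    push_cast at e1 e2
    linear_combination (-(a : ℝ)) * e1 - (b : ℝ) * e2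
  set n : ℤ := (r.1 - p.1) * a + (r.2 - p.2) * b
  rw [htint] at ht0 ht1
  have h0 : (0 : ℤ) < n := by exact_mod_cast ht0
  have h1' : n < 1 := by exact_mod_cast ht1
  omega

/-- If a tropically planar graph `G` arises from a regular unimodular triangulation `Δ`
of a lattice polygon `P` and some bounded face of `G` shares an edge with every other
bounded face (as happens for a big face graph), then the interior polygon `P_int` is a
panoptigon.  Bounded faces of `G` correspond to interior lattice points of `P`, two
faces sharing an edge exactly when the corresponding points are joined by an edge of
`Δ`; edges of a unimodular triangulation are primitive. -/
theorem big_face_interior_panoptigon (S : Finset (ℤ × ℤ)) (P : Set (ℝ × ℝ))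
    (hP : P = convexHull ℝ (latticeEmb '' (S : Set (ℤ × ℤ))))
    (Δedges : Finset ((ℤ × ℤ) × (ℤ × ℤ)))
    -- edges of the unimodular triangulation are primitive segments
    (hprim : ∀ e ∈ Δedges, Int.gcd (e.1.1 - e.2.1) (e.1.2 - e.2.2) = 1)
    (p : ℤ × ℤ) (hp : latticeEmb p ∈ interior P)
    -- the bounded face dual to `p` shares an edge with every other bounded face:
    -- `p` is joined by an edge of `Δ` to every other interior lattice point of `P`
    (hbig : ∀ q : ℤ × ℤ, latticeEmb q ∈ interior P → q ≠ p →
      (p, q) ∈ Δedges ∨ (q, p) ∈ Δedges) :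
    -- conclusion: the interior polygon of `P` is a panoptigon
    ∃ p' : ℤ × ℤ,
      latticeEmb p' ∈ convexHull ℝ (latticeEmb '' {q : ℤ × ℤ | latticeEmb q ∈ interior P}) ∧
      ∀ q : ℤ × ℤ,
        latticeEmb q ∈ convexHull ℝ (latticeEmb '' {q : ℤ × ℤ | latticeEmb q ∈ interior P}) →
        q ≠ p' →
        ∀ r : ℤ × ℤ, latticeEmb r ∉ openSegment ℝ (latticeEmb p') (latticeEmb q) := by
  refine ⟨p, subset_convexHull ℝ _ ⟨p, hp, rfl⟩, ?_⟩
  intro q hq hqp r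
  -- interior P is convex, so the hull of interior lattice points lies in interior P
  have hconv : Convex ℝ (interior P) := by
    rw [hP]; exact (convex_convexHull ℝ _).interior
  have hsub : convexHull ℝ (latticeEmb '' {q : ℤ × ℤ | latticeEmb q ∈ interior P})
      ⊆ interior P := by
    apply convexHull_min _ hconv
    rintro _ ⟨x, hx, rfl⟩; exact hx
  have hqint : latticeEmb q ∈ interior P := hsub hq
  have hgcd : Int.gcd (q.1 - p.1) (q.2 - p.2) = 1 := by
    rcases hbig q hqint hqp with h | h
    · have h' := hprim _ h
      simp only at h'
      have hsym : Int.gcd (q.1 - p.1) (q.2 - p.2) = Int.gcd (p.1 - q.1) (p.2 - q.2) := by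
        unfold Int.gcd
        rw [show q.1 - p.1 = -(p.1 - q.1) by ring, show q.2 - p.2 = -(p.2 - q.2) by ring,
          Int.natAbs_neg, Int.natAbs_neg]
      rw [hsym]; exact h'
    · exact hprim _ h
  exact primitive_no_interior p q r hgcd
end

section
/- Let Q be a panoptigon of lattice width at most 2 whose relaxed polygon Q^{(-1)} is a lattice polygon. Then |Q ∩ ℤ²| ≤ 11. -/
/-!
The lattice points of `Q` are exactly the interior lattice points of a lattice polygon `P`, and a
unimodular change of coordinates puts them in three consecutive rows. Visibility from the
viewpoint `p` leaves at most three points in the row of `p`, and at most one in a row at distance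
two from it. The other rows are bounded by a cone argument. If the interior lattice points
of row `j` lie within `B` of one of them, take a vertex `t` of `P` strictly beyond row `j`; the
segment from a lattice point of the row on the other side of `j` to `t` crosses row `j` in the
interior of `P`, hence within `B + 1` of that point, and at most halfway, so that row has at most
`4B + 4` points. When `p` lies in the middle row and both outer rows are nonempty, midpoints of
outer points lie on the middle row instead, which bounds the two outer rows by `8` together.
In every case there are at most `3 + 8 = 11` points.
-/

open Set

@[simp] lemma latticeEmb_apply (q : ℤ × ℤ) : latticeEmb q = ((q.1 : ℝ), (q.2 : ℝ)) := rfl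

lemma latticeEmb_add_mem_openSegment (p d : ℤ × ℤ) {n : ℤ} (hn : 2 ≤ n) :
    latticeEmb (p + d) ∈ openSegment ℝ (latticeEmb p) (latticeEmb (p + n • d)) := by
  have hn' : (2 : ℝ) ≤ n := by exact_mod_cast hn
  rw [openSegment_eq_image']
  refine ⟨1 / n, ⟨by positivity, (div_lt_one (by linarith)).2 (by linarith)⟩, ?_⟩
  ext <;> simp <;> field_simp

def row (L : Set (ℤ × ℤ)) (j : ℤ) : Set ℤ := {x | (x, j) ∈ L}

@[simp] lemma mem_row {L : Set (ℤ × ℤ)} {j x : ℤ} : x ∈ row L j ↔ (x, j) ∈ L := Iff.rfl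

lemma exists_mem_ncard_le_sub_add_one {R : Set ℤ} (hne : R.Nonempty) (hbelow : BddBelow R)
    (habove : BddAbove R) : ∃ a ∈ R, ∃ b ∈ R, (R.ncard : ℤ) ≤ b - a + 1 := by
  refine ⟨sInf R, Int.csInf_mem hne hbelow, sSup R, Int.csSup_mem hne habove, ?_⟩
  have hsub : R ⊆ Icc (sInf R) (sSup R) := fun x hx =>
    ⟨csInf_le hbelow hx, le_csSup habove hx⟩
  have hle : sInf R ≤ sSup R + 1 := by
    obtain ⟨x, hx⟩ := hne
    obtain ⟨h₁, h₂⟩ := hsub hx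
    omega
  calc (R.ncard : ℤ) ≤ (Icc (sInf R) (sSup R)).ncard := by
        exact_mod_cast ncard_le_ncard hsub (finite_Icc _ _)
    _ = sSup R - sInf R + 1 := by
        rw [← Finset.coe_Icc, ncard_coe_finset, Int.card_Icc_of_le _ _ hle]
        ring

lemma ncard_le_of_abs_sub_le {R : Set ℤ} {D : ℕ} (h : ∀ x ∈ R, ∀ y ∈ R, |x - y| ≤ D) :
    R.ncard ≤ D + 1 := by
  obtain rfl | ⟨x₀, hx₀⟩ := R.eq_empty_or_nonempty
  · simp
  have hnear : ∀ y ∈ R, x₀ - D ≤ y ∧ y ≤ x₀ + D := fun y hy => by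
    have := abs_le.1 (h x₀ hx₀ y hy)
    omega
  obtain ⟨a, ha, b, hb, hR⟩ := exists_mem_ncard_le_sub_add_one ⟨x₀, hx₀⟩
    ⟨x₀ - D, fun y hy => (hnear y hy).1⟩ ⟨x₀ + D, fun y hy => (hnear y hy).2⟩
  have := abs_le.1 (h b hb a ha)
  omega

lemma ncard_le_sum_three_rows {L : Set (ℤ × ℤ)} {m : ℤ}
    (hL : ∀ q ∈ L, q.2 ∈ Icc m (m + 2)) :
    L.ncard ≤ (row L m).ncard + (row L (m + 1)).ncard + (row L (m + 2)).ncard := by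
  have hrows : L = (·, m) '' row L m ∪ (·, m + 1) '' row L (m + 1) ∪
      (·, m + 2) '' row L (m + 2) := by
    ext ⟨x, y⟩
    simp only [mem_union, mem_image, mem_row, Prod.mk.injEq]
    constructor
    · intro hq
      obtain ⟨h₁, h₂⟩ := hL _ hq
      obtain rfl | rfl | rfl : y = m ∨ y = m + 1 ∨ y = m + 2 := by simp only at h₁ h₂; omega
      exacts [.inl (.inl ⟨x, hq, rfl, rfl⟩), .inl (.inr ⟨x, hq, rfl, rfl⟩),
        .inr ⟨x, hq, rfl, rfl⟩]
    · rintro ((⟨x, hx, rfl, rfl⟩ | ⟨x, hx, rfl, rfl⟩) | ⟨x, hx, rfl, rfl⟩) <;> exact hx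
  conv_lhs => rw [hrows]
  refine (ncard_union_le _ _).trans (add_le_add (ncard_union_le _ _) le_rfl) |>.trans ?_
  simp only [ncard_image_of_injective _ (Prod.mk_left_injective _), le_rfl]

lemma Convex.mk_mem_of_le_of_le_s17 {C : Set (ℝ × ℝ)} (hC : Convex ℝ C) {u v w y : ℝ}
    (hu : (u, y) ∈ C) (hv : (v, y) ∈ C) (huw : u ≤ w) (hwv : w ≤ v) : (w, y) ∈ C :=
  hC.segment_subset hu hv <| by
    rw [← Prod.image_mk_segment_left, segment_eq_Icc (huw.trans hwv)]
    exact ⟨w, ⟨huw, hwv⟩, rfl⟩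

lemma Convex.abs_sub_lt_of_mem {C : Set (ℝ × ℝ)} (hC : Convex ℝ C) {c j : ℤ} {B : ℕ}
    (hc : (c, j) ∈ latticeEmb ⁻¹' C)
    (hrow : ∀ x ∈ row (latticeEmb ⁻¹' C) j, |x - c| ≤ B)
    {w : ℝ} (hw : (w, (j : ℝ)) ∈ C) : |w - c| < B + 1 := by
  rw [abs_lt]
  constructor
  · by_contra! hle
    have := hrow (c - B - 1) (hC.mk_mem_of_le_of_le_s17 hw hc (by push_cast; linarith)
      (by push_cast; linarith))
    have := abs_le.1 this
    omega
  · by_contra! hle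
    have := hrow (c + B + 1) (hC.mk_mem_of_le_of_le_s17 hc hw (by push_cast; linarith)
      (by push_cast; linarith))
    have := abs_le.1 this
    omega

def VisibleFrom (L : Set (ℤ × ℤ)) (p : ℤ × ℤ) : Prop :=
  ∀ q ∈ L, q ≠ p → ∀ r : ℤ × ℤ,
    latticeEmb r ∉ openSegment ℝ (latticeEmb p) (latticeEmb q)

namespace VisibleFrom

lemma abs_sub_le_one {L : Set (ℤ × ℤ)} {p : ℤ × ℤ} (h : VisibleFrom L p) {x : ℤ}
    (hx : x ∈ row L p.2) : |x - p.1| ≤ 1 := by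
  by_contra! hfar
  have hq : (x, p.2) = p + |x - p.1| • (Int.sign (x - p.1), 0) := by
    ext <;> simp [mul_comm |x - p.1|, Int.sign_mul_abs]
  refine h _ hx (fun he => ?_) _ (hq ▸ latticeEmb_add_mem_openSegment p _ (by omega))
  rw [← he] at hfar
  simp at hfar

lemma eq_of_mem_row_add_two_mul {C : Set (ℝ × ℝ)} (hC : Convex ℝ C) {p : ℤ × ℤ}
    (h : VisibleFrom (latticeEmb ⁻¹' C) p) {s : ℤ} (hs : s ≠ 0) {x x' : ℤ}
    (hx : x ∈ row (latticeEmb ⁻¹' C) (p.2 + 2 * s))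
    (hx' : x' ∈ row (latticeEmb ⁻¹' C) (p.2 + 2 * s)) : x = x' := by
  wlog hlt : x < x' generalizing x x'
  · rcases (not_lt.1 hlt).lt_or_eq with h' | h'
    exacts [(this hx' hx h').symm, h'.symm]
  -- a point of the row between `x` and `x'` has the parity of `p.1`, so it hides a midpoint
  obtain ⟨z, k, hxz, hzx', hz⟩ : ∃ z k : ℤ, x ≤ z ∧ z ≤ x' ∧ z = p.1 + 2 * k := by
    rcases Int.even_or_odd (x - p.1) with ⟨k, hk⟩ | ⟨k, hk⟩
    · exact ⟨x, k, le_rfl, hlt.le, by omega⟩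
    · exact ⟨x + 1, k + 1, by omega, by omega, by omega⟩
  have hzC : (z, p.2 + 2 * s) ∈ latticeEmb ⁻¹' C :=
    hC.mk_mem_of_le_of_le_s17 hx hx' (by exact_mod_cast hxz) (by exact_mod_cast hzx')
  have hq : (z, p.2 + 2 * s) = p + (2 : ℤ) • (k, s) := by
    ext <;> simp [hz]
  refine (h _ hzC (fun he => ?_) _
    (hq ▸ latticeEmb_add_mem_openSegment p (k, s) le_rfl)).elim
  have := congrArg Prod.snd he
  simp only at this
  omega

end VisibleFrom

def interiorLatticePoints (T : Set (ℤ × ℤ)) : Set (ℤ × ℤ) :=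
  latticeEmb ⁻¹' interior (convexHull ℝ (latticeEmb '' T))

section InteriorLatticePoints

variable {T : Set (ℤ × ℤ)}

lemma exists_mem_mul_snd_sub_pos {s c j : ℤ} (hs : s = 1 ∨ s = -1)
    (hc : (c, j) ∈ interiorLatticePoints T) : ∃ t ∈ T, 0 < s * (t.2 - j) := by
  by_contra! hT
  let f : ℝ × ℝ →ₗ[ℝ] ℝ := (s : ℝ) • LinearMap.snd ℝ ℝ ℝ
  have hsub : convexHull ℝ (latticeEmb '' T) ⊆ f ⁻¹' Iic (s * j) := by
    refine convexHull_min ?_ ((convex_Iic _).linear_preimage f)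
    rintro _ ⟨t, ht, rfl⟩
    have : s * t.2 ≤ s * j := by linarith [hT t ht, mul_sub s t.2 j]
    simpa [f] using (by exact_mod_cast this : (s : ℝ) * t.2 ≤ s * j)
  obtain ⟨ε, hε, hball⟩ := Metric.mem_nhds_iff.1 (mem_interior_iff_mem_nhds.1 hc)
  have hs' : (s : ℝ) * s = 1 := by rcases hs with rfl | rfl <;> norm_num
  have habs : |(s : ℝ)| = 1 := by rcases hs with rfl | rfl <;> norm_num
  have hmem := hsub <| hball (show ((c : ℝ), j + s * (ε / 2)) ∈ Metric.ball _ ε by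
    simp [Prod.dist_eq, habs, abs_of_pos hε, hε])
  simp only [mem_preimage, mem_Iic, f, LinearMap.smul_apply, LinearMap.snd_apply,
    smul_eq_mul] at hmem
  nlinarith

lemma abs_sub_le_of_mem_row_sub {s c j : ℤ} {B : ℕ} (hs : s = 1 ∨ s = -1)
    (hc : (c, j) ∈ interiorLatticePoints T)
    (hrow : ∀ x ∈ row (interiorLatticePoints T) j, |x - c| ≤ B)
    {t : ℤ × ℤ} (ht : t ∈ T) (htj : 0 < s * (t.2 - j)) {x₁ x₂ : ℤ}
    (hx₁ : x₁ ∈ row (interiorLatticePoints T) (j - s))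
    (hx₂ : x₂ ∈ row (interiorLatticePoints T) (j - s)) : |x₁ - x₂| ≤ 4 * B + 3 := by
  have hK := (convex_convexHull ℝ (latticeEmb '' T)).interior
  set D : ℝ := s * (t.2 - j)
  have hD : 1 ≤ D := by
    have : (1 : ℤ) ≤ s * (t.2 - j) := htj
    simp only [D]
    exact_mod_cast this
  have hs' : (s : ℝ) * s = 1 := by rcases hs with rfl | rfl <;> norm_num
  set θ : ℝ := 1 / (D + 1)
  have hθ : 0 < θ := by positivity
  have hθ' : θ ≤ 1 / 2 := by
    rw [div_le_div_iff₀ (by linarith) (by norm_num)]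
    linarith
  -- the segment from a point of row `j - s` to `t` crosses row `j` at parameter `θ`
  have hcross : ∀ x ∈ row (interiorLatticePoints T) (j - s),
      |(1 - θ) * x + θ * t.1 - c| < B + 1 := by
    intro x hx
    refine hK.abs_sub_lt_of_mem hc hrow ?_
    have hmem := (convex_convexHull ℝ _).combo_interior_closure_mem_interior hx
      (subset_closure (subset_convexHull ℝ _ ⟨t, ht, rfl⟩)) (by linarith) hθ.le
      (sub_add_cancel 1 θ)
    convert hmem using 1
    ext
    · simp
    · have ht₂ : (t.2 : ℝ) = j + s * D := by
        simp only [D]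
        linear_combination (↑j - ↑t.2) * hs'
      simp only [latticeEmb_apply, Prod.smul_mk, Prod.mk_add_mk, smul_eq_mul, ht₂, θ]
      push_cast
      field_simp
      ring
  have h₁ := abs_lt.1 (hcross x₁ hx₁)
  have h₂ := abs_lt.1 (hcross x₂ hx₂)
  have hlt : |(x₁ : ℝ) - x₂| < 4 * B + 4 := by
    rw [abs_lt]
    constructor <;> nlinarith
  have : ((|x₁ - x₂| : ℤ) : ℝ) < ((4 * B + 4 : ℤ) : ℝ) := by push_cast; exact hlt
  have := Int.cast_lt.1 this
  omega

lemma abs_add_sub_two_mul_le_three {c j : ℤ} (hc : (c, j) ∈ interiorLatticePoints T)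
    (hrow : ∀ x ∈ row (interiorLatticePoints T) j, |x - c| ≤ 1) {x z : ℤ}
    (hx : x ∈ row (interiorLatticePoints T) (j - 1))
    (hz : z ∈ row (interiorLatticePoints T) (j + 1)) : |x + z - 2 * c| ≤ 3 := by
  have hK := (convex_convexHull ℝ (latticeEmb '' T)).interior
  have hmid := hK hx hz (by norm_num : (0 : ℝ) ≤ 1 / 2) (by norm_num : (0 : ℝ) ≤ 1 / 2)
    (by norm_num)
  have hlt := hK.abs_sub_lt_of_mem (B := 1) hc (fun x hx => by exact_mod_cast hrow x hx)
    (w := ((x + z : ℝ)) / 2) <| by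
      convert hmid using 1
      ext <;> simp <;> ring
  have : ((|x + z - 2 * c| : ℤ) : ℝ) < 4 := by
    push_cast
    rw [abs_lt] at hlt ⊢
    constructor <;> linarith
  have : |x + z - 2 * c| < 4 := by exact_mod_cast this
  omega

lemma ncard_row_sub_le {s c j : ℤ} {B : ℕ} (hs : s = 1 ∨ s = -1)
    (hc : (c, j) ∈ interiorLatticePoints T)
    (hrow : ∀ x ∈ row (interiorLatticePoints T) j, |x - c| ≤ B) :
    (row (interiorLatticePoints T) (j - s)).ncard ≤ 4 * B + 4 := by
  obtain ⟨t, ht, htj⟩ := exists_mem_mul_snd_sub_pos hs hc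
  refine ncard_le_of_abs_sub_le (D := 4 * B + 3) fun x hx y hy => ?_
  push_cast
  exact abs_sub_le_of_mem_row_sub hs hc hrow ht htj hx hy

lemma ncard_adjacent_rows_le_of_nonempty {c j : ℤ} (hc : (c, j) ∈ interiorLatticePoints T)
    (hrow : ∀ x ∈ row (interiorLatticePoints T) j, |x - c| ≤ 1)
    (hbelow : (row (interiorLatticePoints T) (j - 1)).Nonempty)
    (habove : (row (interiorLatticePoints T) (j + 1)).Nonempty) :
    (row (interiorLatticePoints T) (j - 1)).ncard +
      (row (interiorLatticePoints T) (j + 1)).ncard ≤ 8 := by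
  obtain ⟨x₀, hx₀⟩ := hbelow
  obtain ⟨z₀, hz₀⟩ := habove
  have key := fun x (hx : x ∈ row _ (j - 1)) z (hz : z ∈ row _ (j + 1)) =>
    abs_le.1 (abs_add_sub_two_mul_le_three hc hrow hx hz)
  obtain ⟨a, ha, b, hb, hab⟩ := exists_mem_ncard_le_sub_add_one ⟨x₀, hx₀⟩
    ⟨2 * c - 3 - z₀, fun x hx => by linarith [key x hx z₀ hz₀]⟩
    ⟨2 * c + 3 - z₀, fun x hx => by linarith [key x hx z₀ hz₀]⟩
  obtain ⟨a', ha', b', hb', hab'⟩ := exists_mem_ncard_le_sub_add_one ⟨z₀, hz₀⟩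
    ⟨2 * c - 3 - x₀, fun z hz => by linarith [key x₀ hx₀ z hz]⟩
    ⟨2 * c + 3 - x₀, fun z hz => by linarith [key x₀ hx₀ z hz]⟩
  have := key a ha a' ha'
  have := key b hb b' hb'
  omega

namespace VisibleFrom

variable {p : ℤ × ℤ}

lemma ncard_row_le_three {L : Set (ℤ × ℤ)} (h : VisibleFrom L p) : (row L p.2).ncard ≤ 3 :=
  ncard_le_of_abs_sub_le (D := 2) fun x hx y hy => by
    have := abs_le.1 (h.abs_sub_le_one hx)
    have := abs_le.1 (h.abs_sub_le_one hy)
    rw [abs_le]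
    push_cast
    omega

lemma ncard_outer_rows_le {s : ℤ} (hs : s = 1 ∨ s = -1) (hp : p ∈ interiorLatticePoints T)
    (h : VisibleFrom (interiorLatticePoints T) p) :
    (row (interiorLatticePoints T) (p.2 + s)).ncard +
      (row (interiorLatticePoints T) (p.2 + 2 * s)).ncard ≤ 8 := by
  obtain hempty | ⟨e, he⟩ := (row (interiorLatticePoints T) (p.2 + 2 * s)).eq_empty_or_nonempty
  · have hrow : ∀ x ∈ row (interiorLatticePoints T) p.2, |x - p.1| ≤ (1 : ℕ) :=
      fun x hx => by exact_mod_cast h.abs_sub_le_one hx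
    have := ncard_row_sub_le (s := -s) (by omega) hp hrow
    rw [sub_neg_eq_add] at this
    rw [hempty, ncard_empty]
    omega
  · have hsingle : ∀ x ∈ row (interiorLatticePoints T) (p.2 + 2 * s), x = e := fun x hx =>
      h.eq_of_mem_row_add_two_mul (convex_convexHull ℝ _).interior (by omega) hx he
    have hnear := ncard_row_sub_le (B := 0) hs he fun x hx => by simp [hsingle x hx]
    have hfar := ncard_le_of_abs_sub_le (R := row (interiorLatticePoints T) (p.2 + 2 * s))
      (D := 0) fun x hx y hy => by simp [hsingle x hx, hsingle y hy]
    rw [show p.2 + 2 * s - s = p.2 + s by ring] at hnear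
    omega

lemma ncard_adjacent_rows_le (hp : p ∈ interiorLatticePoints T)
    (h : VisibleFrom (interiorLatticePoints T) p) :
    (row (interiorLatticePoints T) (p.2 - 1)).ncard +
      (row (interiorLatticePoints T) (p.2 + 1)).ncard ≤ 8 := by
  have hrow : ∀ x ∈ row (interiorLatticePoints T) p.2, |x - p.1| ≤ (1 : ℕ) := fun x hx => by
    exact_mod_cast h.abs_sub_le_one hx
  obtain hbelow | hbelow := (row (interiorLatticePoints T) (p.2 - 1)).eq_empty_or_nonempty
  · have := ncard_row_sub_le (s := -1) (.inr rfl) hp hrow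
    rw [sub_neg_eq_add] at this
    rw [hbelow, ncard_empty]
    omega
  obtain habove | habove := (row (interiorLatticePoints T) (p.2 + 1)).eq_empty_or_nonempty
  · have := ncard_row_sub_le (s := 1) (.inl rfl) hp hrow
    rw [habove, ncard_empty]
    omega
  exact ncard_adjacent_rows_le_of_nonempty hp (by exact_mod_cast hrow) hbelow habove

end VisibleFrom

theorem ncard_interiorLatticePoints_le_eleven {p : ℤ × ℤ} {m : ℤ}
    (hp : p ∈ interiorLatticePoints T) (h : VisibleFrom (interiorLatticePoints T) p)
    (hm : ∀ q ∈ interiorLatticePoints T, q.2 ∈ Icc m (m + 2)) :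
    (interiorLatticePoints T).ncard ≤ 11 := by
  have hrows := ncard_le_sum_three_rows hm
  have hown := h.ncard_row_le_three
  obtain hp₂ | hp₂ | hp₂ : p.2 = m ∨ p.2 = m + 1 ∨ p.2 = m + 2 := by
    have := hm p hp
    simp only [mem_Icc] at this
    omega
  · have := h.ncard_outer_rows_le (.inl rfl) hp
    rw [hp₂, mul_one] at this
    rw [hp₂] at hown
    omega
  · have := h.ncard_adjacent_rows_le hp
    rw [hp₂, add_sub_cancel_right, show m + 1 + 1 = m + 2 by ring] at this
    rw [hp₂] at hown
    omega
  · have := h.ncard_outer_rows_le (.inr rfl) hp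
    rw [hp₂, show m + 2 + -1 = m + 1 by ring, show m + 2 + 2 * -1 = m by ring] at this
    rw [hp₂] at hown
    omega

end InteriorLatticePoints

lemma latticeEmb_preimage_convexHull_interiorLatticePoints (T : Set (ℤ × ℤ)) :
    latticeEmb ⁻¹' convexHull ℝ (latticeEmb '' interiorLatticePoints T) =
      interiorLatticePoints T :=
  Subset.antisymm
    (fun _ hq => convexHull_min (image_preimage_subset _ _)
      (convex_convexHull ℝ _).interior hq)
    (fun _ hq => subset_convexHull ℝ _ (mem_image_of_mem _ hq))

lemma snd_mem_Icc_of_mem_convexHull {S : Set (ℤ × ℤ)} {m M : ℤ}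
    (hS : ∀ s ∈ S, s.2 ∈ Icc m M) {q : ℤ × ℤ}
    (hq : latticeEmb q ∈ convexHull ℝ (latticeEmb '' S)) : q.2 ∈ Icc m M := by
  have hsub : convexHull ℝ (Prod.snd '' (latticeEmb '' S)) ⊆ Icc (m : ℝ) M := by
    refine convexHull_min ?_ (convex_Icc _ _)
    rintro _ ⟨_, ⟨s, hs, rfl⟩, rfl⟩
    exact ⟨by simpa using (hS s hs).1, by simpa using (hS s hs).2⟩
  have := hsub ((LinearMap.snd ℝ ℝ ℝ).image_convexHull _ ▸ mem_image_of_mem Prod.snd hq)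
  simpa using this

def unimodularEquiv {R : Type*} [CommRing R] {a b u v : R} (h : u * a + v * b = 1) :
    (R × R) ≃ₗ[R] R × R where
  toFun q := (u * q.1 + v * q.2, a * q.2 - b * q.1)
  invFun q := (a * q.1 - v * q.2, b * q.1 + u * q.2)
  map_add' _ _ := by ext <;> simp <;> ring
  map_smul' _ _ := by ext <;> simp <;> ring
  left_inv q := by ext <;> simp <;> [linear_combination q.1 * h; linear_combination q.2 * h]
  right_inv q := by ext <;> simp <;> [linear_combination q.1 * h; linear_combination q.2 * h]

lemma exists_equiv_snd_eq_of_gcd_eq_one {a b : ℤ} (hab : Int.gcd a b = 1) :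
    ∃ (f : ℤ × ℤ ≃ ℤ × ℤ) (F : (ℝ × ℝ) ≃ᵃ[ℝ] ℝ × ℝ),
      (∀ q, F (latticeEmb q) = latticeEmb (f q)) ∧ ∀ q, (f q).2 = a * q.2 - b * q.1 := by
  obtain ⟨u, v, huv⟩ := Int.isCoprime_iff_gcd_eq_one.2 hab
  refine ⟨(unimodularEquiv huv).toEquiv, (unimodularEquiv (R := ℝ) (a := a) (b := b) (u := u)
    (v := v) (by exact_mod_cast huv)).toAffineEquiv, fun q => ?_, fun q => rfl⟩
  ext <;> simp [unimodularEquiv]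

lemma exists_forall_mem_Icc_of_abs_sub_le {α : Type*} {S : Finset α} (hS : S.Nonempty)
    {g : α → ℤ} {D : ℤ} (h : ∀ x ∈ S, ∀ y ∈ S, |g x - g y| ≤ D) :
    ∃ m, ∀ x ∈ S, g x ∈ Icc m (m + D) := by
  obtain ⟨x₀, hx₀, hmin⟩ := S.exists_min_image g hS
  exact ⟨g x₀, fun x hx => ⟨hmin x hx, by linarith [(abs_le.1 (h x hx x₀ hx₀)).2]⟩⟩

section LatticeAffineEquiv

variable {f : ℤ × ℤ ≃ ℤ × ℤ} {F : (ℝ × ℝ) ≃ᵃ[ℝ] ℝ × ℝ}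

lemma image_latticeEmb_preimage (hF : ∀ q, F (latticeEmb q) = latticeEmb (f q))
    (X : Set (ℝ × ℝ)) : f '' (latticeEmb ⁻¹' X) = latticeEmb ⁻¹' (F '' X) := by
  ext q
  refine ⟨?_, fun ⟨z, hz, hzq⟩ => ⟨f.symm q, ?_, f.apply_symm_apply q⟩⟩
  · rintro ⟨q, hq, rfl⟩
    exact ⟨_, hq, hF q⟩
  · have : F (latticeEmb (f.symm q)) = F z := by rw [hF, f.apply_symm_apply, hzq]
    rwa [mem_preimage, F.injective this]

lemma image_convexHull_latticeEmb (hF : ∀ q, F (latticeEmb q) = latticeEmb (f q))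
    (S : Set (ℤ × ℤ)) :
    F '' convexHull ℝ (latticeEmb '' S) = convexHull ℝ (latticeEmb '' (f '' S)) := by
  have := F.toAffineMap.image_convexHull (latticeEmb '' S)
  rw [AffineEquiv.coe_toAffineMap] at this
  rw [this, image_image, image_image]
  simp only [hF]

lemma image_interiorLatticePoints (hF : ∀ q, F (latticeEmb q) = latticeEmb (f q))
    (T : Set (ℤ × ℤ)) : f '' interiorLatticePoints T = interiorLatticePoints (f '' T) := by
  rw [interiorLatticePoints, image_latticeEmb_preimage hF,
    ← F.coe_toHomeomorphOfFiniteDimensional, Homeomorph.image_interior,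
    AffineEquiv.coe_toHomeomorphOfFiniteDimensional, image_convexHull_latticeEmb hF]
  rfl

lemma VisibleFrom.image (hF : ∀ q, F (latticeEmb q) = latticeEmb (f q)) {L : Set (ℤ × ℤ)}
    {p : ℤ × ℤ} (h : VisibleFrom L p) : VisibleFrom (f '' L) (f p) := by
  rintro _ ⟨q, hq, rfl⟩ hne r hr
  have hr' : r ∈ f '' (latticeEmb ⁻¹' openSegment ℝ (latticeEmb p) (latticeEmb q)) := by
    rw [image_latticeEmb_preimage hF, mem_preimage, ← F.coe_toAffineMap, image_openSegment]
    simpa only [AffineEquiv.coe_toAffineMap, hF] using hr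
  obtain ⟨r₀, hr₀, rfl⟩ := hr'
  exact h q hq (fun e => hne (e ▸ rfl)) r₀ hr₀

end LatticeAffineEquiv

/-- A panoptigon `Q` of lattice width at most 2 whose relaxed polygon `Q^{(-1)}` is a
lattice polygon (equivalently, `Q` is the interior polygon of some lattice polygon) has
at most 11 lattice points. -/
theorem lw_le_two_panoptigon_card_le_11 (S : Finset (ℤ × ℤ)) (Q : Set (ℝ × ℝ))
    (hQ : Q = convexHull ℝ (latticeEmb '' (S : Set (ℤ × ℤ))))
    -- Q is a panoptigon
    (hpan : ∃ p : ℤ × ℤ, latticeEmb p ∈ Q ∧ ∀ q : ℤ × ℤ, latticeEmb q ∈ Q → q ≠ p →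
      ∀ r : ℤ × ℤ, latticeEmb r ∉ openSegment ℝ (latticeEmb p) (latticeEmb q))
    -- Q has lattice width at most 2: some primitive direction has width ≤ 2
    (hlw : ∃ a b : ℤ, Int.gcd a b = 1 ∧ ∀ p ∈ S, ∀ q ∈ S,
      |(a * p.2 - b * p.1) - (a * q.2 - b * q.1)| ≤ 2)
    -- Q^{(-1)} is a lattice polygon: Q is the interior polygon of a lattice polygon
    (hrelax : ∃ T : Finset (ℤ × ℤ), Q = convexHull ℝ
      (latticeEmb '' {q : ℤ × ℤ |
        latticeEmb q ∈ interior (convexHull ℝ (latticeEmb '' (T : Set (ℤ × ℤ))))})) :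
    Set.ncard {q : ℤ × ℤ | latticeEmb q ∈ Q} ≤ 11 := by
  obtain ⟨p, hpQ, hvis⟩ := hpan
  obtain ⟨a, b, hab, hwidth⟩ := hlw
  obtain ⟨T, hT⟩ := hrelax
  obtain ⟨f, F, hF, hf⟩ := exists_equiv_snd_eq_of_gcd_eq_one hab
  have hS : S.Nonempty := by
    by_contra! hS
    simp [hQ, hS] at hpQ
  obtain ⟨m, hm⟩ := exists_forall_mem_Icc_of_abs_sub_le (g := fun s => a * s.2 - b * s.1)
    hS hwidth
  have hL : {q | latticeEmb q ∈ Q} = interiorLatticePoints T := by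
    rw [hT]
    exact latticeEmb_preimage_convexHull_interiorLatticePoints _
  have hp : p ∈ {q | latticeEmb q ∈ Q} := hpQ
  have hvis' : VisibleFrom {q | latticeEmb q ∈ Q} p := hvis
  rw [hL] at hp hvis' ⊢
  rw [← ncard_image_of_injective _ f.injective, image_interiorLatticePoints hF]
  refine ncard_interiorLatticePoints_le_eleven (p := f p) (m := m) ?_ ?_ ?_ <;>
    rw [← image_interiorLatticePoints hF]
  · exact mem_image_of_mem f hp
  · exact hvis'.image hF
  · rintro _ ⟨q, hq, rfl⟩
    refine snd_mem_Icc_of_mem_convexHull (S := f '' S) ?_ ?_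
    · rintro _ ⟨s, hs, rfl⟩
      exact hf s ▸ hm s hs
    · rw [← hF, ← image_convexHull_latticeEmb hF, ← hQ]
      rw [← hL] at hq
      exact mem_image_of_mem F hq
end

section
/- A convex lattice polygon P satisfies |P ∩ ℤ²| ≤ (ℓ(P)+1)², where ℓ(P) is the lattice diameter of P (the maximum number of lattice points of P on a single line, minus one). -/
section Progression

variable {E : Type*} [AddCommGroup E] [Module ℝ E] {s : Set E}

theorem Convex.add_nsmul_mem_of_le (hs : Convex ℝ s) {x v : E} {n k : ℕ} (hx : x ∈ s)
    (hxn : x + n • v ∈ s) (hkn : k ≤ n) : x + k • v ∈ s := by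
  rcases Nat.eq_zero_or_pos n with rfl | hn
  · simpa [Nat.le_zero.mp hkn] using hx
  have hn' : (n : ℝ) ≠ 0 := by positivity
  have ht : (k / n : ℝ) ∈ Set.Icc 0 1 :=
    ⟨by positivity, div_le_one_of_le₀ (by exact_mod_cast hkn) n.cast_nonneg⟩
  convert hs.add_smul_mem hx hxn ht using 2
  rw [← Nat.cast_smul_eq_nsmul ℝ, ← Nat.cast_smul_eq_nsmul ℝ, smul_smul, div_mul_cancel₀ _ hn']

theorem collinear_range_add_nsmul (x v : E) : Collinear ℝ (Set.range fun k : ℕ => x + k • v) := by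
  rw [collinear_iff_exists_forall_eq_smul_vadd]
  refine ⟨x, v, ?_⟩
  rintro _ ⟨k, rfl⟩
  exact ⟨k, by rw [vadd_eq_add, add_comm, Nat.cast_smul_eq_nsmul]⟩

end Progression

theorem latticeEmb_add_nsmul (b d : ℤ × ℤ) (k : ℕ) :
    latticeEmb (b + k • d) = latticeEmb b + k • latticeEmb d := by
  ext <;> simp [latticeEmb]

def reduceMod (n : ℕ) (q : ℤ × ℤ) : ZMod n × ZMod n := ((q.1 : ZMod n), (q.2 : ZMod n))

theorem exists_eq_add_nsmul_of_reduceMod_eq {n : ℕ} {a b : ℤ × ℤ}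
    (h : reduceMod n a = reduceMod n b) : ∃ d, a = b + n • d := by
  simp only [reduceMod, Prod.mk.injEq, ZMod.intCast_eq_intCast_iff_dvd_sub] at h
  obtain ⟨⟨d₁, h₁⟩, ⟨d₂, h₂⟩⟩ := h
  exact ⟨(-d₁, -d₂), by ext <;> simp <;> linarith⟩

theorem card_image_range_add_nsmul (b : ℤ × ℤ) {d : ℤ × ℤ} (hd : d ≠ 0) (m : ℕ) :
    ((Finset.range m).image fun k : ℕ => b + k • d).card = m := by
  have hinj : Function.Injective fun k : ℕ => k • d := fun s t h =>
    Nat.cast_injective (R := ℤ) (smul_left_injective ℤ hd (by simpa only [natCast_zsmul] using h))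
  exact (Finset.card_image_of_injective _ ((add_right_injective b).comp hinj)).trans
    (Finset.card_range m)

theorem reduceMod_injOn {P : Set (ℝ × ℝ)} (hP : Convex ℝ P) {ℓ : ℕ}
    (hdiam : ∀ T : Finset (ℤ × ℤ), (∀ q ∈ T, latticeEmb q ∈ P) →
      Collinear ℝ (latticeEmb '' (T : Set (ℤ × ℤ))) → T.card ≤ ℓ + 1) :
    Set.InjOn (reduceMod (ℓ + 1)) {q | latticeEmb q ∈ P} := by
  intro a ha b hb hab
  by_contra hne
  obtain ⟨d, rfl⟩ := exists_eq_add_nsmul_of_reduceMod_eq hab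
  have hd : d ≠ 0 := by rintro rfl; simp at hne
  let T := (Finset.range (ℓ + 2)).image fun k : ℕ => b + k • d
  have hTP : ∀ q ∈ T, latticeEmb q ∈ P := by
    simp only [T, Finset.mem_image, Finset.mem_range]
    rintro _ ⟨k, hk, rfl⟩
    replace ha : latticeEmb b + (ℓ + 1) • latticeEmb d ∈ P := by rwa [← latticeEmb_add_nsmul]
    rw [latticeEmb_add_nsmul]
    exact hP.add_nsmul_mem_of_le hb ha (by omega)
  have hT : Collinear ℝ (latticeEmb '' (T : Set (ℤ × ℤ))) := by
    refine (collinear_range_add_nsmul (latticeEmb b) (latticeEmb d)).subset ?_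
    simp only [T, Finset.coe_image, Set.image_image, latticeEmb_add_nsmul]
    exact Set.image_subset_range _ _
  have := hdiam T hTP hT
  rw [card_image_range_add_nsmul b hd] at this
  omega

/-- A convex lattice polygon of lattice diameter `ℓ` (every line contains at most
`ℓ + 1` of its lattice points) has at most `(ℓ + 1)²` lattice points. -/
theorem card_le_lattice_diameter_sq (S : Finset (ℤ × ℤ)) (P : Set (ℝ × ℝ))
    (hP : P = convexHull ℝ (latticeEmb '' (S : Set (ℤ × ℤ))))
    (ℓ : ℕ)
    (hdiam : ∀ T : Finset (ℤ × ℤ), (∀ q ∈ T, latticeEmb q ∈ P) →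
      Collinear ℝ (latticeEmb '' (T : Set (ℤ × ℤ))) → T.card ≤ ℓ + 1) :
    Set.ncard {q : ℤ × ℤ | latticeEmb q ∈ P} ≤ (ℓ + 1) ^ 2 := by
  have hinj := reduceMod_injOn (hP ▸ convex_convexHull ℝ _) hdiam
  calc Set.ncard {q : ℤ × ℤ | latticeEmb q ∈ P}
      ≤ (Set.univ : Set (ZMod (ℓ + 1) × ZMod (ℓ + 1))).ncard :=
        Set.ncard_le_ncard_of_injOn _ (fun _ _ => Set.mem_univ _) hinj Set.finite_univ
    _ = (ℓ + 1) ^ 2 := by rw [Set.ncard_univ, Nat.card_prod, Nat.card_zmod, sq]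
end

section
/- In the hyperelliptic classification, a Type 1 hyperelliptic polygon of genus g (with g interior lattice points on the line y = 1, and boundary points only at heights 0 and 2) is a panoptigon if and only if g ≤ 3. -/
/-- The lattice points of the Type 1 hyperelliptic polygon of genus `g` with parameter
`i` (where `g ≤ i ≤ 2g`): the points `(0,0),...,(i,0)` at height 0, the interior points
`(1,1),...,(g,1)` at height 1, and the points `(1,2),...,(2g-i+1,2)` at height 2. -/
def type1Pts (g i : ℤ) : Set (ℤ × ℤ) :=
  {q | (q.2 = 0 ∧ 0 ≤ q.1 ∧ q.1 ≤ i) ∨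
       (q.2 = 1 ∧ 1 ≤ q.1 ∧ q.1 ≤ g) ∨
       (q.2 = 2 ∧ 1 ≤ q.1 ∧ q.1 ≤ 2 * g - i + 1)}

/-- A Type 1 hyperelliptic polygon of genus `g ≥ 2` is a panoptigon iff `g ≤ 3`. -/
theorem type1_panoptigon_iff (g i : ℤ) (hg : 2 ≤ g) (hgi : g ≤ i) (hi : i ≤ 2 * g) :
    (∃ p ∈ type1Pts g i, ∀ q ∈ type1Pts g i,
      q = p ∨ Int.gcd (q.1 - p.1) (q.2 - p.2) = 1) ↔ g ≤ 3 := by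
  constructor
  · rintro ⟨⟨px, py⟩, hp, hall⟩
    by_contra hg3
    push_neg at hg3
    have hg4 : 4 ≤ g := by omega
    simp only [type1Pts, Set.mem_setOf_eq] at hp
    rcases hp with ⟨h2, h0, h1⟩ | ⟨h2, h0, h1⟩ | ⟨h2, h0, h1⟩ <;>
      subst h2
    · -- py = 0
      rcases le_or_gt 2 px with h | h
      · rcases hall (0, 0) (Or.inl ⟨rfl, by omega, by omega⟩) with h' | h'
        · simp only [Prod.mk.injEq] at h'; omega
        · simp only [Int.gcd, sub_zero, Int.natAbs_zero, Nat.gcd_zero_right] at h'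
          omega
      · rcases hall (i, 0) (Or.inl ⟨rfl, by omega, by omega⟩) with h' | h'
        · simp only [Prod.mk.injEq] at h'; omega
        · simp only [Int.gcd, sub_zero, Int.natAbs_zero, Nat.gcd_zero_right] at h'
          omega
    · -- py = 1
      rcases le_or_gt 3 px with h | h
      · rcases hall (1, 1) (Or.inr (Or.inl ⟨rfl, by omega, by omega⟩)) with h' | h'
        · simp only [Prod.mk.injEq] at h'; omega
        · simp only [Int.gcd, sub_self, Int.natAbs_zero, Nat.gcd_zero_right] at h'
          omega
      · rcases hall (g, 1) (Or.inr (Or.inl ⟨rfl, by omega, by omega⟩)) with h' | h'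
        · simp only [Prod.mk.injEq] at h'; omega
        · simp only [Int.gcd, sub_self, Int.natAbs_zero, Nat.gcd_zero_right] at h'
          omega
    · -- py = 2
      rcases le_or_gt (px + 2) i with h | h
      · rcases hall (px + 2, 0) (Or.inl ⟨rfl, by omega, by omega⟩) with h' | h'
        · simp only [Prod.mk.injEq] at h'; omega
        · rw [show px + 2 - px = 2 by ring] at h'
          norm_num [Int.gcd] at h'
      · have hpx : 3 ≤ px := by omega
        rcases hall (px - 2, 0) (Or.inl ⟨rfl, by omega, by omega⟩) with h' | h'
        · simp only [Prod.mk.injEq] at h'; omega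
        · rw [show px - 2 - px = -2 by ring] at h'
          norm_num [Int.gcd] at h'
  · intro h3
    refine ⟨(2, 1), Or.inr (Or.inl ⟨rfl, by omega, by omega⟩), ?_⟩
    rintro ⟨qx, qy⟩ hq
    simp only [type1Pts, Set.mem_setOf_eq] at hq
    rcases hq with ⟨h2, h0, h1⟩ | ⟨h2, h0, h1⟩ | ⟨h2, h0, h1⟩ <;>
      subst h2
    · right
      show Int.gcd (qx - 2) (0 - 1) = 1
      rw [show (0:ℤ) - 1 = -1 by ring]
      simp [Int.gcd]
    · rcases eq_or_ne qx 2 with h | h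
      · left; rw [h]
      · right
        show Int.gcd (qx - 2) (1 - 1) = 1
        rw [show (1:ℤ) - 1 = 0 by ring]
        simp only [Int.gcd, Int.natAbs_zero, Nat.gcd_zero_right]
        omega
    · right
      show Int.gcd (qx - 2) (2 - 1) = 1
      rw [show (2:ℤ) - 1 = 1 by ring]
      simp [Int.gcd]
end
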